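/- arXiv:1401.7840 — 6 statements merged into one kernel-verified Lean document; each statement's English description precedes it below -/
import Mathlib

section
/- Let V be a quadratic stochastic operator on the simplex S^{m-1} with coefficients (p_{ij,k}). Then V is a Volterra operator (i.e. p_{ij,k} = 0 whenever k ∉ {i,j}) if and only if there exists a skew-symmetric real m×m matrix A = (a_{ij}) with a_{ii} = 0 and |a_{ij}| ≤ 1 for all i,j, such that for every x ∈ S^{m-1} and every k ∈ {1,…,m}, (Vx)_k = x_k (1 + ∑_{i=1}^m a_{ki} x_i); moreover one can take a_{ki} = 2 p_{ik,k} − 1 for i ≠ k. -/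
/-!
If `p i j k = 0` for `k ∉ {i, j}`, only the row `i = k` and the column `j = k` survive in
`(Vx)_k = ∑ i j, p i j k x_i x_j`; by symmetry both contribute `x_k ∑ i, p i k k x_i`, so
`(Vx)_k = x_k (2 ∑ i, p i k k x_i - x_k)`, which on the simplex is `x_k (1 + ∑ i, a_{ki} x_i)`
with `a_{ki} = 2 p_{ik,k} - 1`. Skew-symmetry of `a` is `p_{ik,i} + p_{ik,k} = 1`.
Conversely, such a representation makes `(Vx)_k` vanish whenever `x_k = 0`; at the midpoint
of the vertices `i` and `j` this sum of nonnegative terms contains `p_{ij,k} x_i x_j` with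
`x_i, x_j > 0`.
-/

open Finset

variable {ι : Type*} [Fintype ι]

/-- The quadratic stochastic operator with coefficients `p i j k = p_{ij,k}`. -/
def qso (p : ι → ι → ι → ℝ) (x : ι → ℝ) (k : ι) : ℝ :=
  ∑ i, ∑ j, p i j k * x i * x j

def IsVolterra (p : ι → ι → ι → ℝ) : Prop :=
  ∀ i j k, k ≠ i → k ≠ j → p i j k = 0

def volterraMatrix [DecidableEq ι] (p : ι → ι → ι → ℝ) (k i : ι) : ℝ :=
  if k = i then 0 else 2 * p i k k - 1

theorem abs_volterraMatrix_le_one [DecidableEq ι] {p : ι → ι → ι → ℝ}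
    (hnonneg : ∀ i j k, 0 ≤ p i j k) (hsum : ∀ i j, ∑ k, p i j k = 1) (k i : ι) :
    |volterraMatrix p k i| ≤ 1 := by
  have hle : p i k k ≤ 1 := hsum i k ▸ single_le_sum (fun l _ => hnonneg i k l) (mem_univ k)
  unfold volterraMatrix
  split_ifs
  · simp
  · exact abs_le.2 ⟨by linarith [hnonneg i k k], by linarith⟩

theorem mul_le_qso {p : ι → ι → ι → ℝ} (hnonneg : ∀ i j k, 0 ≤ p i j k) {x : ι → ℝ}
    (hx : 0 ≤ x) (i j k : ι) : p i j k * x i * x j ≤ qso p x k := by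
  have hterm : ∀ i j, 0 ≤ p i j k * x i * x j := fun i j =>
    mul_nonneg (mul_nonneg (hnonneg i j k) (hx i)) (hx j)
  calc p i j k * x i * x j ≤ ∑ j', p i j' k * x i * x j' :=
        single_le_sum (fun j' _ => hterm i j') (mem_univ j)
    _ ≤ qso p x k := single_le_sum (fun i' _ => sum_nonneg fun j' _ => hterm i' j') (mem_univ i)

theorem isVolterra_of_forall_qso_eq_zero {p : ι → ι → ι → ℝ} (hnonneg : ∀ i j k, 0 ≤ p i j k)
    (h : ∀ x ∈ stdSimplex ℝ ι, ∀ k, x k = 0 → qso p x k = 0) : IsVolterra p := by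
  classical
  intro i j k hki hkj
  set x : ι → ℝ := (1 / 2 : ℝ) • Pi.single i 1 + (1 / 2 : ℝ) • Pi.single j 1 with hx
  have hmem : x ∈ stdSimplex ℝ ι :=
    convex_stdSimplex ℝ ι (single_mem_stdSimplex ℝ i) (single_mem_stdSimplex ℝ j)
      (by norm_num) (by norm_num) (by norm_num)
  have hxk : x k = 0 := by simp [hx, hki, hkj]
  have hxi : 0 < x i := by
    simp only [hx, Pi.add_apply, Pi.smul_apply, Pi.single_apply, smul_eq_mul]
    split_ifs <;> norm_num
  have hxj : 0 < x j := by
    simp only [hx, Pi.add_apply, Pi.smul_apply, Pi.single_apply, smul_eq_mul]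
    split_ifs <;> norm_num
  have hle : p i j k * x i * x j ≤ 0 := h x hmem k hxk ▸ mul_le_qso hnonneg hmem.1 i j k
  have hpos : 0 < x i * x j := mul_pos hxi hxj
  nlinarith [hnonneg i j k]

namespace IsVolterra

variable {p : ι → ι → ι → ℝ}

theorem apply_self (hV : IsVolterra p) (hsum : ∀ i j, ∑ k, p i j k = 1) (k : ι) :
    p k k k = 1 := by
  rw [← hsum k k, sum_eq_single k (fun l _ hl => hV k k l hl hl) (by simp)]

theorem add_apply_eq_one [DecidableEq ι] (hV : IsVolterra p) (hsum : ∀ i j, ∑ k, p i j k = 1)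
    {i k : ι} (hik : i ≠ k) : p i k i + p i k k = 1 := by
  rw [← hsum i k, ← sum_pair hik]
  refine sum_subset (subset_univ _) fun l _ hl => ?_
  simp only [mem_insert, mem_singleton, not_or] at hl
  exact hV i k l hl.1 hl.2

theorem volterraMatrix_antisymm [DecidableEq ι] (hV : IsVolterra p)
    (hsymm : ∀ i j k, p i j k = p j i k) (hsum : ∀ i j, ∑ k, p i j k = 1) (i j : ι) :
    volterraMatrix p i j = -volterraMatrix p j i := by
  unfold volterraMatrix
  by_cases hij : i = j
  · simp [hij]
  · rw [if_neg hij, if_neg (Ne.symm hij), hsymm j i i]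
    linarith [hV.add_apply_eq_one hsum hij]

theorem qso_eq (hV : IsVolterra p) (hsymm : ∀ i j k, p i j k = p j i k) (x : ι → ℝ) (k : ι) :
    qso p x k = x k * (2 * ∑ i, p i k k * x i - p k k k * x k) := by
  classical
  have hrow : ∀ i ∈ univ.erase k, ∑ j, p i j k * x i * x j = p i k k * x i * x k :=
    fun i hi => sum_eq_single k
      (fun j _ hj => by rw [hV i j k (ne_of_mem_erase hi).symm (Ne.symm hj)]; ring) (by simp)
  have hcol : ∑ j, p k j k * x k * x j = x k * ∑ j, p j k k * x j := by
    rw [mul_sum]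
    exact sum_congr rfl fun j _ => by rw [hsymm]; ring
  have hsplit := add_sum_erase univ (fun i => p i k k * x i) (mem_univ k)
  rw [qso, ← add_sum_erase univ _ (mem_univ k), hcol, sum_congr rfl hrow, ← sum_mul]
  linear_combination x k * hsplit

theorem qso_eq_volterraMatrix [DecidableEq ι] (hV : IsVolterra p)
    (hsymm : ∀ i j k, p i j k = p j i k) (hsum : ∀ i j, ∑ k, p i j k = 1) {x : ι → ℝ}
    (hx : ∑ i, x i = 1) (k : ι) :
    qso p x k = x k * (1 + ∑ i, volterraMatrix p k i * x i) := by
  have hA : ∑ i, volterraMatrix p k i * x i + (2 * p k k k - 1) * x k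
      = ∑ i, (2 * p i k k - 1) * x i := by
    rw [← add_sum_erase univ _ (mem_univ k), ← add_sum_erase univ _ (mem_univ k),
      sum_congr rfl fun i hi => by rw [volterraMatrix, if_neg (ne_of_mem_erase hi).symm]]
    simp [volterraMatrix]
  have hlin : ∑ i, (2 * p i k k - 1) * x i = 2 * ∑ i, p i k k * x i - 1 := by
    simp only [sub_mul, one_mul, sum_sub_distrib, hx, mul_sum, mul_assoc]
  rw [hV.qso_eq hsymm, hV.apply_self hsum]
  rw [hV.apply_self hsum] at hA
  linear_combination (-x k) * (hA.trans hlin)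

end IsVolterra

theorem volterra_iff_skew_repr_general (m : ℕ)
    (p : Fin m → Fin m → Fin m → ℝ)
    (hsymm : ∀ i j k, p i j k = p j i k)
    (hnonneg : ∀ i j k, 0 ≤ p i j k)
    (hsum : ∀ i j, ∑ k, p i j k = 1) :
    ((∀ i j k, k ≠ i → k ≠ j → p i j k = 0) ↔
      ∃ A : Fin m → Fin m → ℝ,
        (∀ i j, A i j = - A j i) ∧ (∀ i, A i i = 0) ∧ (∀ i j, |A i j| ≤ 1) ∧
        (∀ x ∈ stdSimplex ℝ (Fin m), ∀ k,
          (∑ i, ∑ j, p i j k * x i * x j) = x k * (1 + ∑ i, A k i * x i))) ∧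
    ((∀ i j k, k ≠ i → k ≠ j → p i j k = 0) →
      ((∀ i j : Fin m, (if i = j then (0:ℝ) else 2 * p j i i - 1)
          = - (if j = i then (0:ℝ) else 2 * p i j j - 1)) ∧
       (∀ i j : Fin m, |(if i = j then (0:ℝ) else 2 * p j i i - 1)| ≤ 1) ∧
       (∀ x ∈ stdSimplex ℝ (Fin m), ∀ k,
          (∑ i, ∑ j, p i j k * x i * x j)
            = x k * (1 + ∑ i, (if k = i then (0:ℝ) else 2 * p i k k - 1) * x i)))) := by
  have hrepr (hV : IsVolterra p) :
      (∀ i j, volterraMatrix p i j = -volterraMatrix p j i) ∧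
      (∀ i j, |volterraMatrix p i j| ≤ 1) ∧
      (∀ x ∈ stdSimplex ℝ (Fin m), ∀ k, qso p x k = x k * (1 + ∑ i, volterraMatrix p k i * x i)) :=
    ⟨hV.volterraMatrix_antisymm hsymm hsum, abs_volterraMatrix_le_one hnonneg hsum,
      fun x hx => hV.qso_eq_volterraMatrix hsymm hsum hx.2⟩
  refine ⟨⟨fun hV => ⟨volterraMatrix p, (hrepr hV).1, fun i => if_pos rfl, (hrepr hV).2⟩, ?_⟩,
    hrepr⟩
  rintro ⟨A, -, -, -, hA⟩
  exact isVolterra_of_forall_qso_eq_zero hnonneg fun x hx k hxk => by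
    rw [qso, hA x hx k, hxk, zero_mul]

/-- A quadratic stochastic operator (with coefficients `p`) is a Volterra
operator iff there is a skew-symmetric matrix `A` with zero diagonal and `|A i j| ≤ 1`
such that `(Vx)_k = x_k (1 + ∑ i, A k i * x i)` on the simplex; moreover one can take
`A k i = 2 * p i k k - 1` for `i ≠ k`. -/
theorem volterra_iff_skew_repr (m : ℕ) (hm : 1 ≤ m)
    (p : Fin m → Fin m → Fin m → ℝ)
    (hsymm : ∀ i j k, p i j k = p j i k)
    (hnonneg : ∀ i j k, 0 ≤ p i j k)
    (hsum : ∀ i j, ∑ k, p i j k = 1) :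
    ((∀ i j k, k ≠ i → k ≠ j → p i j k = 0) ↔
      ∃ A : Fin m → Fin m → ℝ,
        (∀ i j, A i j = - A j i) ∧ (∀ i, A i i = 0) ∧ (∀ i j, |A i j| ≤ 1) ∧
        (∀ x ∈ stdSimplex ℝ (Fin m), ∀ k,
          (∑ i, ∑ j, p i j k * x i * x j) = x k * (1 + ∑ i, A k i * x i))) ∧
    ((∀ i j k, k ≠ i → k ≠ j → p i j k = 0) →
      ((∀ i j : Fin m, (if i = j then (0:ℝ) else 2 * p j i i - 1)
          = - (if j = i then (0:ℝ) else 2 * p i j j - 1)) ∧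
       (∀ i j : Fin m, |(if i = j then (0:ℝ) else 2 * p j i i - 1)| ≤ 1) ∧
       (∀ x ∈ stdSimplex ℝ (Fin m), ∀ k,
          (∑ i, ∑ j, p i j k * x i * x j)
            = x k * (1 + ∑ i, (if k = i then (0:ℝ) else 2 * p i k k - 1) * x i)))) :=
  volterra_iff_skew_repr_general m p hsymm hnonneg hsum
end

section
/- Let V_1, …, V_m be Volterra quadratic stochastic operators on S^{m-1} such that (V_k x)_k = x_k^2 for all x ∈ S^{m-1} and all k ∈ {1,…,m}. For every ε > 0 there exists r ∈ ℕ with −2^r + (m−2)r < log(ε)/log(2) such that: for every x ∈ S^{m-1} there exist pairwise distinct indices j_1, …, j_{m-1} ∈ {1,…,m} and an index j_0 ∈ {1,…,m} \ {j_1,…,j_{m-1}} with (V_{j_{m-1}}^r ∘ ⋯ ∘ V_{j_1}^r)(x) ∈ U_ε^{j_0}, where V^r denotes the r-fold iterate. In particular a deterministic composition of r(m−1) operators from {V_1,…,V_m} maps x into U_ε = ∪_{i=1}^m U_ε^i. -/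
/-!
Applying `V_j` with `(V_j x)_j = x_j ^ 2` `r` times sends the coordinate `x_j` to `x_j ^ (2 ^ r)`,
while a Volterra operator at most doubles every coordinate. Starting from any point, choose at
each step an index `j` not used before with `x_j ≤ 1/2` (there is one, since at least two indices
are unused and the coordinates sum to `1`) and apply `V_j ^ r`. The coordinate `x_j` drops to at
most `2 ^ (-2 ^ r)`, and each later step multiplies it by at most `2 ^ r`, so after `m - 1` steps
every chosen coordinate is at most `2 ^ (-2 ^ r + (m - 2) r)`, which is below `ε` once `r` is
large, as `2 ^ r` outgrows `(m - 2) r`. Exactly one index is left unchosen.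
-/

/-- The map of a quadratic stochastic operator given by coefficients `p`. -/
noncomputable def qsoMap {m : ℕ} (p : Fin m → Fin m → Fin m → ℝ) (x : Fin m → ℝ) :
    Fin m → ℝ :=
  fun k => ∑ i, ∑ j, p i j k * x i * x j

open Finset

lemma Function.iterate_le_pow_mul_of_mapsTo {α : Type*} {f : α → α} {s : Set α} {g : α → ℝ}
    {c : ℝ} (hc : 0 ≤ c) (hf : Set.MapsTo f s s) (hg : ∀ x ∈ s, g (f x) ≤ c * g x)
    (r : ℕ) {x : α} (hx : x ∈ s) : g (f^[r] x) ≤ c ^ r * g x := by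
  induction r with
  | zero => simp
  | succ r ih =>
    rw [Function.iterate_succ_apply', pow_succ', mul_assoc]
    exact (hg _ (hf.iterate r hx)).trans (mul_le_mul_of_nonneg_left ih hc)

lemma Function.iterate_eq_pow_two_pow_of_mapsTo {α : Type*} {f : α → α} {s : Set α}
    {g : α → ℝ} (hf : Set.MapsTo f s s) (hg : ∀ x ∈ s, g (f x) = g x ^ 2)
    (r : ℕ) {x : α} (hx : x ∈ s) : g (f^[r] x) = g x ^ 2 ^ r := by
  induction r with
  | zero => simp
  | succ r ih =>
    rw [Function.iterate_succ_apply', hg _ (hf.iterate r hx), ih, ← pow_mul, pow_succ]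

lemma exists_mem_le_inv_card_of_mem_stdSimplex {ι : Type*} [Fintype ι] {x : ι → ℝ}
    (hx : x ∈ stdSimplex ℝ ι) {T : Finset ι} (hT : T.Nonempty) :
    ∃ j ∈ T, x j ≤ (#T : ℝ)⁻¹ := by
  refine exists_le_of_sum_le hT ?_
  have hcard : (#T : ℝ) ≠ 0 := by exact_mod_cast hT.card_pos.ne'
  calc ∑ j ∈ T, x j ≤ ∑ j, x j := sum_le_sum_of_subset_of_nonneg (subset_univ T) fun j _ _ ↦ hx.1 j
    _ = ∑ _ ∈ T, (#T : ℝ)⁻¹ := by rw [hx.2, sum_const, nsmul_eq_mul, mul_inv_cancel₀ hcard]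

section qsoMap

variable {m : ℕ} {q : Fin m → Fin m → Fin m → ℝ}

lemma mapsTo_qsoMap_stdSimplex (hnn : ∀ i j l, 0 ≤ q i j l) (hs : ∀ i j, ∑ l, q i j l = 1) :
    Set.MapsTo (qsoMap q) (stdSimplex ℝ (Fin m)) (stdSimplex ℝ (Fin m)) := by
  intro x hx
  refine ⟨fun l ↦ sum_nonneg fun i _ ↦ sum_nonneg fun j _ ↦
    mul_nonneg (mul_nonneg (hnn i j l) (hx.1 i)) (hx.1 j), ?_⟩
  calc ∑ l, qsoMap q x l = ∑ i, ∑ j, (∑ l, q i j l) * x i * x j := by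
        simp only [qsoMap, sum_mul]
        rw [sum_comm]
        exact sum_congr rfl fun i _ ↦ sum_comm
    _ = (∑ i, x i) * ∑ j, x j := by simp only [hs, one_mul, sum_mul_sum]
    _ = 1 := by rw [hx.2, one_mul]

lemma qsoMap_apply_le_two_mul (hnn : ∀ i j l, 0 ≤ q i j l) (hs : ∀ i j, ∑ l, q i j l = 1)
    (hv : ∀ i j l, l ≠ i → l ≠ j → q i j l = 0) {x : Fin m → ℝ}
    (hx : x ∈ stdSimplex ℝ (Fin m)) (l : Fin m) : qsoMap q x l ≤ 2 * x l := by
  have hq : ∀ i j, q i j l ≤ (if i = l then 1 else 0) + (if j = l then 1 else 0) := by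
    intro i j
    have hle : q i j l ≤ 1 := (single_le_sum (fun l _ ↦ hnn i j l) (mem_univ l)).trans (hs i j).le
    by_cases hi : i = l
    · split_ifs <;> linarith
    by_cases hj : j = l
    · simpa [hi, hj] using hle
    · simp [hi, hj, hv i j l (Ne.symm hi) (Ne.symm hj)]
  calc qsoMap q x l
      ≤ ∑ i, ∑ j, ((if i = l then 1 else 0) + (if j = l then 1 else 0)) * x i * x j := by
        unfold qsoMap
        gcongr with i _ j _
        · exact hx.1 j
        · exact hx.1 i
        · exact hq i j
    _ = 2 * x l := by
        simp only [add_mul, ite_mul, one_mul, zero_mul, sum_add_distrib, sum_ite_irrel, ← mul_sum,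
          hx.2, mul_one, sum_const_zero, sum_ite_eq', mem_univ, ↓reduceIte, ← sum_mul]
        ring

end qsoMap

open Filter in
lemma tendsto_neg_two_pow_add_mul_atBot (a : ℝ) :
    Tendsto (fun r : ℕ ↦ -(2:ℝ) ^ r + a * r) atTop atBot := by
  have h := ((tendsto_pow_const_div_const_pow_of_one_lt 1 one_lt_two).const_mul a).const_add (-1)
  rw [mul_zero, add_zero] at h
  refine ((tendsto_pow_atTop_atTop_of_one_lt one_lt_two).atTop_mul_neg (by norm_num) h).congr
    fun r ↦ ?_
  field_simp

section composition

variable {m : ℕ} (p : Fin m → Fin m → Fin m → Fin m → ℝ) (r : ℕ)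

noncomputable def qsoIterComp (l : List (Fin m)) (x : Fin m → ℝ) : Fin m → ℝ :=
  l.foldl (fun y j ↦ (qsoMap (p j))^[r] y) x

lemma qsoIterComp_append_singleton (l : List (Fin m)) (j : Fin m) (x : Fin m → ℝ) :
    qsoIterComp p r (l ++ [j]) x = (qsoMap (p j))^[r] (qsoIterComp p r l x) := by
  simp [qsoIterComp]

variable {p}

lemma qsoIterComp_mem_stdSimplex (hnn : ∀ k i j l, 0 ≤ p k i j l)
    (hs : ∀ k i j, ∑ l, p k i j l = 1) (l : List (Fin m)) {x : Fin m → ℝ}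
    (hx : x ∈ stdSimplex ℝ (Fin m)) : qsoIterComp p r l x ∈ stdSimplex ℝ (Fin m) := by
  induction l generalizing x with
  | nil => exact hx
  | cons j l ih => exact ih (((mapsTo_qsoMap_stdSimplex (hnn j) (hs j)).iterate r) hx)

lemma qsoIterComp_snoc_apply_le (hnn : ∀ k i j l, 0 ≤ p k i j l)
    (hs : ∀ k i j, ∑ l, p k i j l = 1) (hv : ∀ k i j l, l ≠ i → l ≠ j → p k i j l = 0)
    (hsq : ∀ k : Fin m, ∀ x ∈ stdSimplex ℝ (Fin m), qsoMap (p k) x k = x k ^ 2)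
    {n : ℕ} {js : Fin n → Fin m} {x : Fin m → ℝ} (hx : x ∈ stdSimplex ℝ (Fin m)) {j : Fin m}
    (hj : qsoIterComp p r (List.ofFn js) x j ≤ 1 / 2)
    (hbound : ∀ t, qsoIterComp p r (List.ofFn js) x (js t) ≤ 2 ^ (-(2:ℝ) ^ r + ((n:ℝ) - 1) * r))
    (t : Fin (n + 1)) :
    qsoIterComp p r (List.ofFn (Fin.snoc js j : Fin (n + 1) → Fin m)) x
        ((Fin.snoc js j : Fin (n + 1) → Fin m) t)
      ≤ 2 ^ (-(2:ℝ) ^ r + (((n + 1 : ℕ) : ℝ) - 1) * r) := by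
  set y := qsoIterComp p r (List.ofFn js) x
  have hy : y ∈ stdSimplex ℝ (Fin m) := qsoIterComp_mem_stdSimplex r hnn hs _ hx
  have hmaps := mapsTo_qsoMap_stdSimplex (hnn j) (hs j)
  have hofn : List.ofFn (Fin.snoc js j : Fin (n + 1) → Fin m) = List.ofFn js ++ [j] := by
    rw [List.ofFn_succ']
    simp [List.concat_eq_append]
  rw [hofn, qsoIterComp_append_singleton]
  induction t using Fin.lastCases with
  | last =>
    rw [Fin.snoc_last,
      Function.iterate_eq_pow_two_pow_of_mapsTo (g := fun z ↦ z j) hmaps (hsq j) r hy]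
    calc y j ^ 2 ^ r ≤ (1 / 2) ^ 2 ^ r := pow_le_pow_left₀ (hy.1 j) hj _
      _ = 2 ^ (-(2:ℝ) ^ r) := by
        rw [Real.rpow_neg zero_le_two, one_div, inv_pow, ← Real.rpow_natCast]
        norm_cast
      _ ≤ _ := Real.rpow_le_rpow_of_exponent_le one_le_two (by push_cast; nlinarith)
  | cast t =>
    rw [Fin.snoc_castSucc]
    calc _ ≤ 2 ^ r * y (js t) :=
          Function.iterate_le_pow_mul_of_mapsTo (g := fun z ↦ z (js t)) zero_le_two hmaps
            (fun z hz ↦ qsoMap_apply_le_two_mul (hnn j) (hs j) (hv j) hz _) r hy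
      _ ≤ 2 ^ r * 2 ^ (-(2:ℝ) ^ r + ((n:ℝ) - 1) * r) := by gcongr; exact hbound t
      _ = _ := by
        rw [← Real.rpow_natCast, ← Real.rpow_add two_pos]
        push_cast
        ring_nf

lemma exists_injective_qsoIterComp_apply_le (hnn : ∀ k i j l, 0 ≤ p k i j l)
    (hs : ∀ k i j, ∑ l, p k i j l = 1) (hv : ∀ k i j l, l ≠ i → l ≠ j → p k i j l = 0)
    (hsq : ∀ k : Fin m, ∀ x ∈ stdSimplex ℝ (Fin m), qsoMap (p k) x k = x k ^ 2)
    {x : Fin m → ℝ} (hx : x ∈ stdSimplex ℝ (Fin m)) :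
    ∀ n < m, ∃ js : Fin n → Fin m, Function.Injective js ∧
      ∀ t, qsoIterComp p r (List.ofFn js) x (js t) ≤ 2 ^ (-(2:ℝ) ^ r + ((n:ℝ) - 1) * r)
  | 0, _ => ⟨Fin.elim0, fun t ↦ t.elim0, fun t ↦ t.elim0⟩
  | n + 1, hn => by
    obtain ⟨js, hinj, hbound⟩ := exists_injective_qsoIterComp_apply_le hnn hs hv hsq hx n (by omega)
    have hcard : 2 ≤ #(univ.image js)ᶜ := by
      rw [card_compl, card_image_of_injective _ hinj, card_univ, Fintype.card_fin, Fintype.card_fin]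
      omega
    obtain ⟨j, hjT, hj⟩ := exists_mem_le_inv_card_of_mem_stdSimplex (T := (univ.image js)ᶜ)
      (qsoIterComp_mem_stdSimplex r hnn hs (List.ofFn js) hx) (card_pos.mp (by omega))
    have hjr : j ∉ Set.range js := by simpa using hjT
    have hj' : qsoIterComp p r (List.ofFn js) x j ≤ 1 / 2 :=
      hj.trans (by rw [one_div]; exact inv_anti₀ two_pos (by exact_mod_cast hcard))
    exact ⟨Fin.snoc js j, Fin.snoc_injective_of_injective hinj hjr,
      qsoIterComp_snoc_apply_le r hnn hs hv hsq hx hj' hbound⟩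

end composition

theorem deterministic_composition_reaches_vertex_nbhd_general (m : ℕ) (hm : 2 ≤ m)
    (p : Fin m → Fin m → Fin m → Fin m → ℝ)
    (hnonneg : ∀ k i j l, 0 ≤ p k i j l)
    (hsum : ∀ k i j, ∑ l, p k i j l = 1)
    (hvol : ∀ k i j l, l ≠ i → l ≠ j → p k i j l = 0)
    (hsq : ∀ k : Fin m, ∀ x ∈ stdSimplex ℝ (Fin m), qsoMap (p k) x k = x k ^ 2)
    (ε : ℝ) (hε : 0 < ε) :
    ∃ r : ℕ, (-(2:ℝ) ^ r + ((m : ℝ) - 2) * r < Real.log ε / Real.log 2) ∧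
      ∀ x ∈ stdSimplex ℝ (Fin m),
        ∃ js : Fin (m - 1) → Fin m, Function.Injective js ∧
        ∃ j₀ : Fin m, j₀ ∉ Set.range js ∧
          (((List.ofFn js).foldl (fun y j => (qsoMap (p j))^[r] y) x)
              ∈ stdSimplex ℝ (Fin m) ∧
           ∀ i : Fin m, i ≠ j₀ →
            ((List.ofFn js).foldl (fun y j => (qsoMap (p j))^[r] y) x) i < ε) := by
  obtain ⟨r, hr⟩ := ((tendsto_neg_two_pow_add_mul_atBot ((m : ℝ) - 2)).eventually_lt_atBot
    (Real.log ε / Real.log 2)).exists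
  refine ⟨r, hr, fun x hx ↦ ?_⟩
  obtain ⟨js, hinj, hbound⟩ :=
    exists_injective_qsoIterComp_apply_le r hnonneg hsum hvol hsq hx (m - 1) (by omega)
  obtain ⟨j₀, hj₀⟩ : ∃ j₀, (univ.image js)ᶜ = {j₀} := card_eq_one.mp <| by
    rw [card_compl, card_image_of_injective _ hinj, card_univ, Fintype.card_fin, Fintype.card_fin]
    omega
  have hrange : ∀ i, i ∉ Set.range js ↔ i = j₀ := fun i ↦ by
    rw [← mem_singleton, ← hj₀]
    simp
  refine ⟨js, hinj, j₀, (hrange j₀).2 rfl, qsoIterComp_mem_stdSimplex r hnonneg hsum _ hx,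
    fun i hi ↦ ?_⟩
  obtain ⟨t, rfl⟩ := not_not.mp (mt (hrange i).1 hi)
  calc _ ≤ 2 ^ (-(2:ℝ) ^ r + (((m - 1 : ℕ) : ℝ) - 1) * r) := hbound t
    _ = 2 ^ (-(2:ℝ) ^ r + ((m : ℝ) - 2) * r) := by rw [Nat.cast_sub (by omega)]; ring_nf
    _ < ε := (Real.lt_logb_iff_rpow_lt one_lt_two hε).mp (by rwa [← Real.log_div_log])

/-- Given Volterra QSOs `V_1, …, V_m` with `(V_k x)_k = x_k^2`, for every
`ε > 0` there is `r ∈ ℕ` with `-2^r + (m-2) r < log ε / log 2` such that from any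
`x ∈ S^{m-1}` a deterministic composition `V_{j_{m-1}}^r ∘ ⋯ ∘ V_{j_1}^r` with pairwise
distinct indices maps `x` into the `ε`-neighbourhood `U_ε^{j_0}` of some vertex
`e_{j_0}` with `j_0 ∉ {j_1, …, j_{m-1}}`. -/
theorem deterministic_composition_reaches_vertex_nbhd (m : ℕ) (hm : 2 ≤ m)
    (p : Fin m → Fin m → Fin m → Fin m → ℝ)
    (hsymm : ∀ k i j l, p k i j l = p k j i l)
    (hnonneg : ∀ k i j l, 0 ≤ p k i j l)
    (hsum : ∀ k i j, ∑ l, p k i j l = 1)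
    (hvol : ∀ k i j l, l ≠ i → l ≠ j → p k i j l = 0)
    (hsq : ∀ k : Fin m, ∀ x ∈ stdSimplex ℝ (Fin m), qsoMap (p k) x k = x k ^ 2)
    (ε : ℝ) (hε : 0 < ε) :
    ∃ r : ℕ, (-(2:ℝ) ^ r + ((m : ℝ) - 2) * r < Real.log ε / Real.log 2) ∧
      ∀ x ∈ stdSimplex ℝ (Fin m),
        ∃ js : Fin (m - 1) → Fin m, Function.Injective js ∧
        ∃ j₀ : Fin m, j₀ ∉ Set.range js ∧
          (((List.ofFn js).foldl (fun y j => (qsoMap (p j))^[r] y) x)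
              ∈ stdSimplex ℝ (Fin m) ∧
           ∀ i : Fin m, i ≠ j₀ →
            ((List.ofFn js).foldl (fun y j => (qsoMap (p j))^[r] y) x) i < ε) :=
  deterministic_composition_reaches_vertex_nbhd_general m hm p hnonneg hsum hvol hsq ε hε
end

section
/- Let 𝒱 = {V_1, V_2, …} be a countable set of Volterra quadratic stochastic operators on S^{m-1} such that (V_k x)_k = x_k^2 for all x ∈ S^{m-1} and all k ∈ {1,…,m}, and let (ν_j)_{j≥1} be a probability distribution on 𝒱 with ν_j > 0 for all j ∈ {1,…,m}. Let (T_n)_{n≥1} be a sequence of independent random operators with ℙ(T_n = V_j) = ν_j for all j and n. Then for every ε > 0 there exist N ∈ ℕ and q > 0 such that for every x ∈ S^{m-1}: ℙ((T_N ∘ T_{N-1} ∘ ⋯ ∘ T_1)(x) ∈ U_ε) ≥ q. (One may take N = r(m−1) and q = ν_1^r ⋯ ν_m^r where r ∈ ℕ satisfies −2^r + (m−2)r < log(ε)/log(2).) -/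
/-! Each coordinate of a Volterra operator at most doubles, while `V_k` squares coordinate `k`.
Hence on a simplex point, some coordinate `j₀` outside the already small ones is `≤ 1/2`, and
`r` applications of `V_{j₀}` push it below `(1/2)^(2^r)` while inflating every other coordinate
by at most `2^r`. Doing this for `m - 1` coordinates in turn leaves all of them below
`2^((m-1)r) (1/2)^(2^r)`, which is `< ε` for large `r`. The fixed word of length `(m-1)r`
that achieves this is drawn by the random iteration with probability at least
`(min_k ν_k)^((m-1)r)`, uniformly in the starting point. -/

open MeasureTheory ProbabilityTheory

section Volterra

variable {m : ℕ}

/-- Symmetry of `p` is not part of this predicate: `qsoMap p` depends only on the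
symmetrisation of `p`. -/
structure IsVolterraQSO (p : Fin m → Fin m → Fin m → ℝ) : Prop where
  nonneg : ∀ i j l, 0 ≤ p i j l
  sum_eq_one : ∀ i j, ∑ l, p i j l = 1
  eq_zero_of_ne_of_ne : ∀ i j l, l ≠ i → l ≠ j → p i j l = 0

namespace IsVolterraQSO

variable {p : Fin m → Fin m → Fin m → ℝ}

theorem le_one (hp : IsVolterraQSO p) (i j l : Fin m) : p i j l ≤ 1 :=
  hp.sum_eq_one i j ▸ Finset.single_le_sum (fun t _ => hp.nonneg i j t) (Finset.mem_univ l)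

theorem qsoMap_mem_stdSimplex (hp : IsVolterraQSO p) {x : Fin m → ℝ}
    (hx : x ∈ stdSimplex ℝ (Fin m)) : qsoMap p x ∈ stdSimplex ℝ (Fin m) := by
  refine ⟨fun k => ?_, ?_⟩
  · exact Finset.sum_nonneg fun i _ => Finset.sum_nonneg fun j _ =>
      mul_nonneg (mul_nonneg (hp.nonneg i j k) (hx.1 i)) (hx.1 j)
  · calc ∑ k, qsoMap p x k = ∑ i, ∑ j, (∑ k, p i j k) * x i * x j := by
          simp only [qsoMap, Finset.sum_mul]
          rw [Finset.sum_comm]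
          exact Finset.sum_congr rfl fun i _ => Finset.sum_comm
      _ = (∑ i, x i) * ∑ j, x j := by simp [hp.sum_eq_one, Finset.sum_mul_sum]
      _ = 1 := by rw [hx.2, one_mul]

theorem qsoMap_le_two_mul (hp : IsVolterraQSO p) {x : Fin m → ℝ}
    (hx : x ∈ stdSimplex ℝ (Fin m)) (l : Fin m) : qsoMap p x l ≤ 2 * x l := by
  have hterm : ∀ i j, p i j l * x i * x j ≤
      (if i = l then x i * x j else 0) + (if j = l then x i * x j else 0) := by
    intro i j
    have hxx : 0 ≤ x i * x j := mul_nonneg (hx.1 i) (hx.1 j)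
    have hpxx : p i j l * x i * x j ≤ x i * x j := by
      rw [mul_assoc]; exact mul_le_of_le_one_left hxx (hp.le_one i j l)
    by_cases hi : i = l
    · split_ifs <;> linarith
    by_cases hj : j = l
    · simpa [hi, hj] using hpxx
    · simp [hi, hj, hp.eq_zero_of_ne_of_ne i j l (Ne.symm hi) (Ne.symm hj)]
  calc qsoMap p x l
      ≤ ∑ i, ∑ j, ((if i = l then x i * x j else 0) + (if j = l then x i * x j else 0)) :=
        Finset.sum_le_sum fun i _ => Finset.sum_le_sum fun j _ => hterm i j
    _ = 2 * x l := by
        simp [Finset.sum_add_distrib, Finset.sum_ite_eq', ← Finset.mul_sum, ← Finset.sum_mul,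
          hx.2]
        ring

end IsVolterraQSO

noncomputable def qsoIter {ι : Type*} (P : ι → Fin m → Fin m → Fin m → ℝ) (w : List ι)
    (x : Fin m → ℝ) : Fin m → ℝ :=
  w.foldl (fun y n => qsoMap (P n) y) x

section qsoIter

variable {ι : Type*} {P : ι → Fin m → Fin m → Fin m → ℝ}

@[simp]
theorem qsoIter_nil (x : Fin m → ℝ) : qsoIter P [] x = x := rfl

@[simp]
theorem qsoIter_cons (a : ι) (w : List ι) (x : Fin m → ℝ) :
    qsoIter P (a :: w) x = qsoIter P w (qsoMap (P a) x) := rfl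

theorem qsoIter_append (v w : List ι) (x : Fin m → ℝ) :
    qsoIter P (v ++ w) x = qsoIter P w (qsoIter P v x) :=
  List.foldl_append

theorem qsoIter_map {κ : Type*} (f : κ → ι) (w : List κ) (x : Fin m → ℝ) :
    qsoIter P (w.map f) x = qsoIter (P ∘ f) w x :=
  List.foldl_map

theorem qsoIter_mem_stdSimplex (hP : ∀ a, IsVolterraQSO (P a)) (w : List ι) {x : Fin m → ℝ}
    (hx : x ∈ stdSimplex ℝ (Fin m)) : qsoIter P w x ∈ stdSimplex ℝ (Fin m) := by
  induction w generalizing x with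
  | nil => exact hx
  | cons a w ih => exact ih ((hP a).qsoMap_mem_stdSimplex hx)

theorem qsoIter_le_two_pow_length_mul (hP : ∀ a, IsVolterraQSO (P a)) (w : List ι)
    {x : Fin m → ℝ} (hx : x ∈ stdSimplex ℝ (Fin m)) (l : Fin m) :
    qsoIter P w x l ≤ 2 ^ w.length * x l := by
  induction w generalizing x with
  | nil => simp
  | cons a w ih =>
    calc qsoIter P (a :: w) x l ≤ 2 ^ w.length * qsoMap (P a) x l :=
          ih ((hP a).qsoMap_mem_stdSimplex hx)
      _ ≤ 2 ^ w.length * (2 * x l) := by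
          gcongr; exact (hP a).qsoMap_le_two_mul hx l
      _ = 2 ^ (a :: w).length * x l := by rw [List.length_cons, pow_succ]; ring

theorem qsoIter_replicate_apply (hP : ∀ a, IsVolterraQSO (P a)) {k : ι} {l : Fin m}
    (hsq : ∀ x ∈ stdSimplex ℝ (Fin m), qsoMap (P k) x l = x l ^ 2) (s : ℕ)
    {x : Fin m → ℝ} (hx : x ∈ stdSimplex ℝ (Fin m)) :
    qsoIter P (List.replicate s k) x l = x l ^ 2 ^ s := by
  induction s generalizing x with
  | zero => simp
  | succ s ih =>
    rw [List.replicate_succ, qsoIter_cons, ih ((hP k).qsoMap_mem_stdSimplex hx), hsq x hx,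
      ← pow_mul, pow_succ']

end qsoIter

theorem exists_mem_le_half {ι : Type*} [Fintype ι] {x : ι → ℝ} (hx : x ∈ stdSimplex ℝ ι)
    {T : Finset ι} (hT : 1 < T.card) : ∃ j ∈ T, x j ≤ 1 / 2 := by
  classical
  obtain ⟨a, ha, b, hb, hab⟩ := Finset.one_lt_card.mp hT
  have hpair : x a + x b ≤ 1 := by
    rw [← hx.2, ← Finset.sum_pair hab]
    exact Finset.sum_le_sum_of_subset_of_nonneg (Finset.subset_univ _) fun i _ _ => hx.1 i
  by_cases h : x a ≤ 1 / 2
  · exact ⟨a, ha, h⟩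
  · exact ⟨b, hb, by linarith⟩

section Words

variable {P : Fin m → Fin m → Fin m → Fin m → ℝ}

theorem exists_word_qsoIter_le (hP : ∀ k, IsVolterraQSO (P k))
    (hsq : ∀ k, ∀ x ∈ stdSimplex ℝ (Fin m), qsoMap (P k) x k = x k ^ 2) (r : ℕ) {c : ℕ}
    (hc : c < m) {x : Fin m → ℝ} (hx : x ∈ stdSimplex ℝ (Fin m)) :
    ∃ w : List (Fin m), ∃ S : Finset (Fin m), w.length = c * r ∧ S.card = c ∧
      ∀ j ∈ S, qsoIter P w x j ≤ 2 ^ (c * r) * (1 / 2) ^ 2 ^ r := by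
  induction c with
  | zero => exact ⟨[], ∅, by simp, by simp, by simp⟩
  | succ c ih =>
    obtain ⟨w, S, hlen, hcard, hS⟩ := ih (by omega)
    set y := qsoIter P w x
    have hy : y ∈ stdSimplex ℝ (Fin m) := qsoIter_mem_stdSimplex hP w hx
    obtain ⟨j₀, hj₀S, hj₀⟩ := exists_mem_le_half hy (T := Sᶜ)
      (by rw [Finset.card_compl, hcard, Fintype.card_fin]; omega)
    rw [Finset.mem_compl] at hj₀S
    refine ⟨w ++ List.replicate r j₀, insert j₀ S, by simp [hlen]; ring,
      by rw [Finset.card_insert_of_notMem hj₀S, hcard], fun j hj => ?_⟩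
    rw [qsoIter_append]
    rcases Finset.mem_insert.mp hj with rfl | hjS
    · calc qsoIter P (List.replicate r j) y j = y j ^ 2 ^ r :=
            qsoIter_replicate_apply hP (hsq j) r hy
        _ ≤ (1 / 2) ^ 2 ^ r := pow_le_pow_left₀ (hy.1 j) hj₀ _
        _ ≤ 2 ^ ((c + 1) * r) * (1 / 2) ^ 2 ^ r :=
            le_mul_of_one_le_left (by positivity) (one_le_pow₀ one_le_two)
    · calc qsoIter P (List.replicate r j₀) y j ≤ 2 ^ r * y j := by
            simpa using qsoIter_le_two_pow_length_mul hP (List.replicate r j₀) hy j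
        _ ≤ 2 ^ r * (2 ^ (c * r) * (1 / 2) ^ 2 ^ r) := by gcongr; exact hS j hjS
        _ = 2 ^ ((c + 1) * r) * (1 / 2) ^ 2 ^ r := by ring

theorem exists_word_qsoIter_le_of_ne (hm : 0 < m) (hP : ∀ k, IsVolterraQSO (P k))
    (hsq : ∀ k, ∀ x ∈ stdSimplex ℝ (Fin m), qsoMap (P k) x k = x k ^ 2) (r : ℕ)
    {x : Fin m → ℝ} (hx : x ∈ stdSimplex ℝ (Fin m)) :
    ∃ w : List (Fin m), ∃ i, w.length = (m - 1) * r ∧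
      ∀ j ≠ i, qsoIter P w x j ≤ 2 ^ ((m - 1) * r) * (1 / 2) ^ 2 ^ r := by
  obtain ⟨w, S, hlen, hcard, hS⟩ := exists_word_qsoIter_le hP hsq r (c := m - 1) (by omega) hx
  obtain ⟨i, hi⟩ := Finset.card_eq_one.mp
    (by rw [Finset.card_compl, hcard, Fintype.card_fin]; omega : Sᶜ.card = 1)
  refine ⟨w, i, hlen, fun j hj => hS j ?_⟩
  by_contra hjS
  exact hj (Finset.mem_singleton.mp (hi ▸ Finset.mem_compl.mpr hjS))

end Words

end Volterra

theorem exists_mul_add_le_two_pow (k s : ℕ) : ∃ r, k * r + s ≤ 2 ^ r := by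
  have ht : 2 * k + s + 1 ≤ 2 ^ (2 * k + s) := Nat.lt_two_pow_self
  -- with `t = 2k + s`: `k (2t) + s ≤ (t + 1)^2 ≤ (2^t)^2`
  refine ⟨2 * (2 * k + s), ?_⟩
  rw [pow_mul']
  nlinarith

theorem exists_two_pow_mul_half_pow_lt (k : ℕ) {ε : ℝ} (hε : 0 < ε) :
    ∃ r : ℕ, (2 : ℝ) ^ (k * r) * (1 / 2) ^ 2 ^ r < ε := by
  obtain ⟨s, hs⟩ := exists_pow_lt_of_lt_one hε (by norm_num : (1 / 2 : ℝ) < 1)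
  obtain ⟨r, hr⟩ := exists_mul_add_le_two_pow k s
  refine ⟨r, lt_of_le_of_lt ?_ hs⟩
  calc (2 : ℝ) ^ (k * r) * (1 / 2) ^ 2 ^ r ≤ 2 ^ (k * r) * (1 / 2) ^ (k * r + s) :=
        mul_le_mul_of_nonneg_left (pow_le_pow_of_le_one (by norm_num) (by norm_num) hr)
          (by positivity)
    _ = (1 / 2) ^ s := by rw [pow_add, ← mul_assoc, ← mul_pow]; norm_num

theorem ofReal_pow_le_measure_forall_lt_eq {Ω ι : Type*} {mΩ : MeasurableSpace Ω}
    [MeasurableSpace ι] [MeasurableSingletonClass ι] {μ : Measure Ω} {ξ : ℕ → Ω → ι}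
    (hindep : iIndepFun ξ μ) (σ : ℕ → ι) (N : ℕ) {q : ℝ} (hq : 0 ≤ q)
    (h : ∀ n < N, ENNReal.ofReal q ≤ μ {ω | ξ n ω = σ n}) :
    ENNReal.ofReal (q ^ N) ≤ μ {ω | ∀ n < N, ξ n ω = σ n} := by
  have hset : {ω | ∀ n < N, ξ n ω = σ n} = ⋂ n ∈ Finset.range N, ξ n ⁻¹' {σ n} := by
    ext; simp
  rw [hset, hindep.meas_biInter fun n _ => ⟨{σ n}, measurableSet_singleton _, rfl⟩,
    ENNReal.ofReal_pow hq]
  calc ENNReal.ofReal q ^ N = ∏ _n ∈ Finset.range N, ENNReal.ofReal q := by simp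
    _ ≤ _ := Finset.prod_le_prod' fun n hn => h n (Finset.mem_range.mp hn)

theorem List.map_range_length_getD {α : Type*} (w : List α) (d : α) :
    (List.range w.length).map (w.getD · d) = w :=
  List.ext_getElem (by simp) fun n _ hn => by simp [List.getElem?_eq_getElem hn]

theorem random_iteration_reaches_vertex_nbhd_general
    {Ω : Type*} {mΩ : MeasurableSpace Ω} (μ : Measure Ω)
    (m : ℕ) (hm : 2 ≤ m)
    (p : ℕ → Fin m → Fin m → Fin m → ℝ)
    (hnonneg : ∀ n i j l, 0 ≤ p n i j l)
    (hsum : ∀ n i j, ∑ l, p n i j l = 1)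
    (hvol : ∀ n i j l, l ≠ i → l ≠ j → p n i j l = 0)
    (hsq : ∀ k : Fin m, ∀ x ∈ stdSimplex ℝ (Fin m), qsoMap (p (k : ℕ)) x k = x k ^ 2)
    (ν : ℕ → ℝ)
    (hνpos : ∀ k : Fin m, 0 < ν (k : ℕ))
    (ξ : ℕ → Ω → ℕ)
    (hindep : iIndepFun ξ μ)
    (hlaw : ∀ n j, μ {ω | ξ n ω = j} = ENNReal.ofReal (ν j))
    (ε : ℝ) (hε : 0 < ε) :
    ∃ N : ℕ, ∃ q : ℝ, 0 < q ∧ ∀ x ∈ stdSimplex ℝ (Fin m),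
      ENNReal.ofReal q ≤
        μ {ω | ∃ i : Fin m, ∀ j : Fin m, j ≠ i →
            ((List.range N).foldl (fun y n => qsoMap (p (ξ n ω)) y) x) j < ε} := by
  obtain ⟨r, hr⟩ := exists_two_pow_mul_half_pow_lt (m - 1) hε
  have : Nonempty (Fin m) := ⟨⟨0, by omega⟩⟩
  obtain ⟨k₀, hk₀⟩ := Finite.exists_min fun k : Fin m => ν k
  refine ⟨(m - 1) * r, ν k₀ ^ ((m - 1) * r), pow_pos (hνpos k₀) _, fun x hx => ?_⟩
  obtain ⟨w, i, hlen, hw⟩ := exists_word_qsoIter_le_of_ne (P := fun k : Fin m => p k)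
    (by omega) (fun k => ⟨hnonneg k, hsum k, hvol k⟩) hsq r hx
  refine (ofReal_pow_le_measure_forall_lt_eq hindep (fun n => w.getD n k₀) _ (hνpos k₀).le
    fun n _ => (hlaw n _).symm ▸ ENNReal.ofReal_le_ofReal (hk₀ _)).trans
    (measure_mono fun ω (hω : ∀ n < (m - 1) * r, ξ n ω = w.getD n k₀) => ⟨i, fun j hj => ?_⟩)
  have hword : (List.range ((m - 1) * r)).map (ξ · ω) = w.map Fin.val := by
    conv_rhs => rw [← w.map_range_length_getD k₀, List.map_map, hlen]
    exact List.map_congr_left fun n hn => hω n (List.mem_range.mp hn)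
  calc qsoIter (p ∘ (ξ · ω)) (List.range ((m - 1) * r)) x j
      = qsoIter (fun k : Fin m => p k) w x j := by rw [← qsoIter_map, hword, qsoIter_map]; rfl
    _ < ε := (hw j hj).trans_lt hr

/-- For i.i.d. random Volterra QSOs `T_n = V_{ξ_n}` chosen from a countable
family `𝒱 = {V_0, V_1, …}` of Volterra QSOs with `(V_k x)_k = x_k^2` for `k < m` and
`ℙ(T_n = V_j) = ν_j`, `ν_j > 0` for `j < m`: for every `ε > 0` there are `N ∈ ℕ` and
`q > 0` such that for every `x ∈ S^{m-1}` the probability that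
`T_N ∘ ⋯ ∘ T_1 (x) ∈ U_ε` is at least `q`. -/
theorem random_iteration_reaches_vertex_nbhd
    {Ω : Type*} {mΩ : MeasurableSpace Ω} (μ : Measure Ω) [IsProbabilityMeasure μ]
    (m : ℕ) (hm : 2 ≤ m)
    (p : ℕ → Fin m → Fin m → Fin m → ℝ)
    (hsymm : ∀ n i j l, p n i j l = p n j i l)
    (hnonneg : ∀ n i j l, 0 ≤ p n i j l)
    (hsum : ∀ n i j, ∑ l, p n i j l = 1)
    (hvol : ∀ n i j l, l ≠ i → l ≠ j → p n i j l = 0)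
    (hsq : ∀ k : Fin m, ∀ x ∈ stdSimplex ℝ (Fin m), qsoMap (p (k : ℕ)) x k = x k ^ 2)
    (ν : ℕ → ℝ) (hν0 : ∀ j, 0 ≤ ν j) (hν1 : ∑' j, ν j = 1)
    (hνpos : ∀ k : Fin m, 0 < ν (k : ℕ))
    (ξ : ℕ → Ω → ℕ) (hξmeas : ∀ n, Measurable (ξ n))
    (hindep : iIndepFun ξ μ)
    (hlaw : ∀ n j, μ {ω | ξ n ω = j} = ENNReal.ofReal (ν j))
    (ε : ℝ) (hε : 0 < ε) :
    ∃ N : ℕ, ∃ q : ℝ, 0 < q ∧ ∀ x ∈ stdSimplex ℝ (Fin m),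
      ENNReal.ofReal q ≤
        μ {ω | ∃ i : Fin m, ∀ j : Fin m, j ≠ i →
            ((List.range N).foldl (fun y n => qsoMap (p (ξ n ω)) y) x) j < ε} :=
  random_iteration_reaches_vertex_nbhd_general (mΩ := mΩ) μ m hm p hnonneg hsum hvol hsq ν hνpos ξ
    hindep hlaw ε hε
end

section
/- Let (h_i)_{i≥1} be real random variables adapted to a filtration (ℱ_i)_{i≥0} with 𝔼[h_{i+1} | ℱ_i] = 0, 𝔼[h_i^2 | ℱ_0] ≤ B for some B > 0, and 𝔼[h_i h_j | ℱ_0] = 0 a.s. for i ≠ j. Set S_n = ∑_{j=1}^n h_j. Then for any constants c_1 ≥ c_2 ≥ 0 and α_1 > α_2 > 0, ℙ-a.s.: ℙ(∃ n ∈ ℕ : S_n ≤ −c_1 − α_1 n | ℱ_0) ≤ ∑_{n≥1} B n^2 / (c_2 + α_2 n^2)^2 + ∑_{n≥1} B n(2n+1) / ((c_1 − c_2) + (α_1 − α_2) n^2)^2. In particular, for fixed α_1 > 0 the conditional probability ℙ(∃ n : S_n ≤ −c − α_1 n | ℱ_0) can be made smaller than any θ > 0 (a.s.) by choosing c large enough.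 -/
/-!
Cut time into the blocks `[k², (k+1)²)`. If `S_n ≤ -c₁ - α₁ n` with `n` in block `k`, then
either `S_{k²} ≤ -(c₂ + α₂ k²)`, or the increment `S_n - S_{k²}`, a sum of `m ≤ 2k` of the `h_j`,
is `≤ -((c₁ - c₂) + (α₁ - α₂) k²)`. Orthogonality bounds the conditional second moment of a sum
of `m` increments by `m B`, so conditional Chebyshev bounds these events by
`B k² / (c₂ + α₂ k²)²` and `B m / ((c₁ - c₂) + (α₁ - α₂) k²)²`; summing over `m ≤ 2k` and then
over `k` gives the two series. With `c₂ = c₁ / 2` and `α₂ = α₁ / 2` both tend to `0` as `c₁ → ∞`.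

A bound `μ[1_A | m] ≤ r` is obtained from `μ (A ∩ s) ≤ r μ s` for all `m`-measurable `s`, a form
in which countable union bounds are immediate.
-/

open MeasureTheory ProbabilityTheory Filter Topology Finset

section Series

variable {p : ℕ → ℝ} {K c d : ℝ}

lemma summable_one_div_nat_add_one_sq : Summable fun n : ℕ => 1 / ((n : ℝ) + 1) ^ 2 := by
  simpa using (summable_nat_add_iff 1).2 (Real.summable_one_div_nat_pow.2 one_lt_two)

lemma norm_div_add_mul_sq_sq_le (hc : 0 ≤ c) (hd : 0 < d)
    (hpK : ∀ n, |p n| ≤ K * ((n : ℝ) + 1) ^ 2) (n : ℕ) :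
    ‖p n / (c + d * ((n : ℝ) + 1) ^ 2) ^ 2‖ ≤ K / d ^ 2 * (1 / ((n : ℝ) + 1) ^ 2) := by
  have hx : 0 < d * ((n : ℝ) + 1) ^ 2 := by positivity
  calc ‖p n / (c + d * ((n : ℝ) + 1) ^ 2) ^ 2‖
      = |p n| / (c + d * ((n : ℝ) + 1) ^ 2) ^ 2 := by rw [Real.norm_eq_abs, abs_div, abs_sq]
    _ ≤ K * ((n : ℝ) + 1) ^ 2 / (d * ((n : ℝ) + 1) ^ 2) ^ 2 := by
        gcongr
        · exact (abs_nonneg _).trans (hpK n)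
        · exact hpK n
        · linarith
    _ = K / d ^ 2 * (1 / ((n : ℝ) + 1) ^ 2) := by field_simp

lemma summable_div_add_mul_sq_sq (hc : 0 ≤ c) (hd : 0 < d)
    (hpK : ∀ n, |p n| ≤ K * ((n : ℝ) + 1) ^ 2) :
    Summable fun n : ℕ => p n / (c + d * ((n : ℝ) + 1) ^ 2) ^ 2 :=
  .of_norm_bounded (summable_one_div_nat_add_one_sq.mul_left _)
    (norm_div_add_mul_sq_sq_le hc hd hpK)

lemma tendsto_tsum_div_add_mul_sq_sq (hd : 0 < d) (hpK : ∀ n, |p n| ≤ K * ((n : ℝ) + 1) ^ 2) :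
    Tendsto (fun c : ℝ => ∑' n : ℕ, p n / (c + d * ((n : ℝ) + 1) ^ 2) ^ 2) atTop (𝓝 0) := by
  have hterm (n : ℕ) :
      Tendsto (fun c : ℝ => p n / (c + d * ((n : ℝ) + 1) ^ 2) ^ 2) atTop (𝓝 0) :=
    tendsto_const_nhds.div_atTop <| (tendsto_pow_atTop two_ne_zero).comp <|
      tendsto_atTop_add_const_right _ _ tendsto_id
  simpa using tendsto_tsum_of_dominated_convergence
    (summable_one_div_nat_add_one_sq.mul_left (K / d ^ 2)) hterm <| by
      filter_upwards [eventually_ge_atTop 0] with c hc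
      exact norm_div_add_mul_sq_sq_le hc hd hpK

lemma abs_mul_mul_two_mul_add_one_le {B x : ℝ} (hx : 1 ≤ x) :
    |B * x * (2 * x + 1)| ≤ 3 * |B| * x ^ 2 := by
  rw [abs_mul, abs_mul, abs_of_pos (by linarith : 0 < x), abs_of_pos (by linarith : 0 < 2 * x + 1)]
  nlinarith [mul_nonneg (mul_nonneg (abs_nonneg B) (by linarith : 0 ≤ x)) (sub_nonneg.2 hx)]

end Series

section Conditional

variable {Ω : Type*} {m mΩ : MeasurableSpace Ω} {μ : Measure Ω} [IsFiniteMeasure μ]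
  {s : Set Ω} {B : ℝ}

lemma setIntegral_le_of_condExp_le (hm : m ≤ mΩ) {f : Ω → ℝ} (hf : Integrable f μ)
    (hfB : ∀ᵐ ω ∂μ, μ[f | m] ω ≤ B) (hs : MeasurableSet[m] s) :
    ∫ ω in s, f ω ∂μ ≤ B * μ.real s := by
  rw [← setIntegral_condExp hm hf hs]
  calc ∫ ω in s, μ[f | m] ω ∂μ ≤ ∫ _ in s, B ∂μ :=
        setIntegral_mono_ae integrable_condExp.integrableOn integrableOn_const hfB
    _ = B * μ.real s := by rw [setIntegral_const, smul_eq_mul, mul_comm]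

section Orthogonal

variable {ι : Type*} {h : ι → Ω → ℝ}

lemma setIntegral_sq_sum_le (hm : m ≤ mΩ) (hL2 : ∀ i, MemLp (h i) 2 μ)
    (hvar : ∀ i, ∀ᵐ ω ∂μ, μ[fun ω' => h i ω' ^ 2 | m] ω ≤ B)
    (horth : ∀ i j, i ≠ j → μ[fun ω => h i ω * h j ω | m] =ᵐ[μ] 0)
    (I : Finset ι) (hs : MeasurableSet[m] s) :
    ∫ ω in s, (∑ i ∈ I, h i ω) ^ 2 ∂μ ≤ #I * B * μ.real s := by
  classical
  have hint (i j : ι) : Integrable (fun ω => h i ω * h j ω) μ := (hL2 i).integrable_mul (hL2 j)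
  have hpair (i j : ι) :
      ∫ ω in s, h i ω * h j ω ∂μ ≤ if i = j then B * μ.real s else 0 := by
    split_ifs with hij
    · subst hij
      simpa only [sq] using
        setIntegral_le_of_condExp_le hm (hint i i) (by simpa only [sq] using hvar i) hs
    · exact (setIntegral_le_of_condExp_le hm (hint i j)
        ((horth i j hij).mono fun ω hω => hω.le) hs).trans_eq (zero_mul _)
  calc ∫ ω in s, (∑ i ∈ I, h i ω) ^ 2 ∂μ
      = ∑ i ∈ I, ∑ j ∈ I, ∫ ω in s, h i ω * h j ω ∂μ := by
        simp_rw [sq, sum_mul_sum]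
        rw [integral_finsetSum _ fun i _ =>
          integrable_finsetSum _ fun j _ => (hint i j).integrableOn]
        exact sum_congr rfl fun i _ => integral_finsetSum _ fun j _ => (hint i j).integrableOn
    _ ≤ ∑ i ∈ I, ∑ j ∈ I, if i = j then B * μ.real s else 0 := by
        gcongr with i _ j _
        exact hpair i j
    _ = #I * B * μ.real s := by simp [mul_assoc]

lemma measureReal_inter_le_of_setIntegral_sq_le {X : Ω → ℝ} (hX : MemLp X 2 μ)
    (hs : MeasurableSet s) {t V : ℝ} (ht : 0 < t) (hV : ∫ ω in s, X ω ^ 2 ∂μ ≤ V) :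
    μ.real ({ω | X ω ≤ -t} ∩ s) ≤ V / t ^ 2 := by
  have hsub : {ω | X ω ≤ -t} ∩ s ⊆ {ω | t ^ 2 ≤ X ω ^ 2} ∩ s :=
    Set.inter_subset_inter_left _ fun ω (hω : X ω ≤ -t) => by
      simp only [Set.mem_ofPred_eq]
      nlinarith
  have hmarkov := mul_meas_ge_le_integral_of_nonneg (μ := μ.restrict s)
    (Eventually.of_forall fun ω => sq_nonneg (X ω)) hX.integrable_sq.integrableOn (t ^ 2)
  rw [measureReal_restrict_apply' hs] at hmarkov
  rw [le_div_iff₀ (by positivity), mul_comm]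
  exact (mul_le_mul_of_nonneg_left (measureReal_mono hsub) (by positivity)).trans
    (hmarkov.trans hV)

lemma measureReal_sum_le_neg_inter_le (hm : m ≤ mΩ) (hL2 : ∀ i, MemLp (h i) 2 μ)
    (hvar : ∀ i, ∀ᵐ ω ∂μ, μ[fun ω' => h i ω' ^ 2 | m] ω ≤ B)
    (horth : ∀ i j, i ≠ j → μ[fun ω => h i ω * h j ω | m] =ᵐ[μ] 0)
    (I : Finset ι) {t : ℝ} (ht : 0 < t) (hs : MeasurableSet[m] s) :
    μ.real ({ω | ∑ i ∈ I, h i ω ≤ -t} ∩ s) ≤ #I * B / t ^ 2 * μ.real s :=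
  (measureReal_inter_le_of_setIntegral_sq_le (memLp_finsetSum I fun i _ => hL2 i) (hm s hs) ht
    (setIntegral_sq_sum_le hm hL2 hvar horth I hs)).trans_eq (by ring)

end Orthogonal

lemma measureReal_iUnion_le_tsum {A : ℕ → Set Ω} (hA : Summable fun i => μ.real (A i)) :
    μ.real (⋃ i, A i) ≤ ∑' i, μ.real (A i) := by
  have hsum : ∑' i, μ (A i) = ENNReal.ofReal (∑' i, μ.real (A i)) := by
    rw [ENNReal.ofReal_tsum_of_nonneg (fun _ => measureReal_nonneg) hA]
    exact tsum_congr fun i => (ofReal_measureReal).symm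
  rw [← ENNReal.toReal_ofReal (tsum_nonneg fun _ => measureReal_nonneg), ← hsum]
  exact ENNReal.toReal_mono (hsum ▸ ENNReal.ofReal_ne_top) (measure_iUnion_le A)

lemma measureReal_inter_le_tsum_mul {A : Set Ω} {C : ℕ → Set Ω} (hAC : A ⊆ ⋃ k, C k)
    {r : ℕ → ℝ} (hr : Summable r) (hC : ∀ k, μ.real (C k ∩ s) ≤ r k * μ.real s) :
    μ.real (A ∩ s) ≤ (∑' k, r k) * μ.real s := by
  have hCs : Summable fun k => μ.real (C k ∩ s) :=
    (hr.mul_right _).of_nonneg_of_le (fun _ => measureReal_nonneg) hC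
  calc μ.real (A ∩ s) ≤ μ.real (⋃ k, C k ∩ s) := by
        rw [← Set.iUnion_inter]
        exact measureReal_mono (Set.inter_subset_inter_left _ hAC)
    _ ≤ ∑' k, μ.real (C k ∩ s) := measureReal_iUnion_le_tsum hCs
    _ ≤ ∑' k, r k * μ.real s := hCs.tsum_le_tsum hC (hr.mul_right _)
    _ = (∑' k, r k) * μ.real s := tsum_mul_right

lemma ae_condExp_indicator_le (hm : m ≤ mΩ) {A : Set Ω} (hA : MeasurableSet A) {r : ℝ}
    (hAr : ∀ s, MeasurableSet[m] s → μ.real (A ∩ s) ≤ r * μ.real s) :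
    ∀ᵐ ω ∂μ, μ[A.indicator (fun _ => (1 : ℝ)) | m] ω ≤ r := by
  have hint : Integrable (A.indicator fun _ => (1 : ℝ)) μ := (integrable_const 1).indicator hA
  refine ae_le_of_ae_le_trim (hm := hm) (ae_le_of_forall_setIntegral_le
    (integrable_condExp.trim hm stronglyMeasurable_condExp) (integrable_const r) fun s hs _ => ?_)
  rw [← setIntegral_trim hm stronglyMeasurable_condExp hs,
    ← setIntegral_trim hm stronglyMeasurable_const hs, setIntegral_condExp hm hint hs,
    setIntegral_indicator hA, setIntegral_const, setIntegral_const, Set.inter_comm, smul_eq_mul,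
    smul_eq_mul, mul_one, mul_comm]
  exact hAr s hs

end Conditional

section Ruin

variable {Ω : Type*}

def ruinEvent (h : ℕ → Ω → ℝ) (c α : ℝ) : Set Ω :=
  {ω | ∃ n : ℕ, 1 ≤ n ∧ (∑ j ∈ range n, h j ω) ≤ -c - α * n}

def blockEvent (h : ℕ → Ω → ℝ) (c₁ c₂ α₁ α₂ : ℝ) (k : ℕ) : Set Ω :=
  {ω | ∑ j ∈ range (k ^ 2), h j ω ≤ -(c₂ + α₂ * k ^ 2)} ∪
    ⋃ i ∈ range (2 * k + 1),
      {ω | ∑ j ∈ Ico (k ^ 2) (k ^ 2 + i), h j ω ≤ -((c₁ - c₂) + (α₁ - α₂) * k ^ 2)}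

noncomputable def ruinBound (B c₁ c₂ α₁ α₂ : ℝ) : ℝ :=
  (∑' n : ℕ, B * ((n : ℝ) + 1) ^ 2 / (c₂ + α₂ * ((n : ℝ) + 1) ^ 2) ^ 2)
    + ∑' n : ℕ, B * ((n : ℝ) + 1) * (2 * ((n : ℝ) + 1) + 1)
        / ((c₁ - c₂) + (α₁ - α₂) * ((n : ℝ) + 1) ^ 2) ^ 2

variable {m mΩ : MeasurableSpace Ω} {μ : Measure Ω} [IsFiniteMeasure μ]
  {h : ℕ → Ω → ℝ} {B c₁ c₂ α₁ α₂ : ℝ} {s : Set Ω}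

lemma ruinEvent_subset_iUnion_blockEvent (hα₁ : 0 ≤ α₁) :
    ruinEvent h c₁ α₁ ⊆ ⋃ k : ℕ, blockEvent h c₁ c₂ α₁ α₂ (k + 1) := by
  rintro ω ⟨n, hn, hSn⟩
  set k := n.sqrt
  have hk : 1 ≤ k := by simpa using Nat.sqrt_le_sqrt hn
  have hkn : k ^ 2 ≤ n := Nat.sqrt_le' n
  have hnk : n - k ^ 2 < 2 * k + 1 := by
    have : n < (k + 1) ^ 2 := Nat.lt_succ_sqrt' n
    rw [show (k + 1) ^ 2 = k ^ 2 + 2 * k + 1 by ring] at this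
    omega
  refine Set.mem_iUnion.2 ⟨k - 1, ?_⟩
  rw [Nat.sub_add_cancel hk]
  by_contra hblock
  simp only [blockEvent, Set.mem_union, Set.mem_iUnion, Set.mem_ofPred_eq, not_or, not_exists,
    not_le] at hblock
  obtain ⟨hhead, htail⟩ := hblock
  have htail := htail (n - k ^ 2) (mem_range.2 hnk)
  rw [Nat.add_sub_cancel' hkn, sum_Ico_eq_sub _ hkn] at htail
  have : α₁ * k ^ 2 ≤ α₁ * n := mul_le_mul_of_nonneg_left (by exact_mod_cast hkn) hα₁
  linarith

lemma measurableSet_ruinEvent (hmeas : ∀ n, Measurable (h n)) (c α : ℝ) :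
    MeasurableSet (ruinEvent h c α) := by
  simp only [ruinEvent, Set.ofPred_exists, Set.ofPred_and]
  exact .iUnion fun n => .inter (.const _) <|
    measurableSet_le (Finset.measurable_sum _ fun j _ => hmeas j) measurable_const

lemma sum_range_two_mul_add_one (k : ℕ) :
    ∑ j ∈ range (2 * k + 1), (j : ℝ) = k * (2 * k + 1) := by
  induction k with
  | zero => simp
  | succ k ih =>
    rw [show 2 * (k + 1) + 1 = 2 * k + 1 + 1 + 1 by ring, sum_range_succ, sum_range_succ, ih]
    push_cast
    ring

lemma measureReal_blockEvent_inter_le (hm : m ≤ mΩ) (hL2 : ∀ n, MemLp (h n) 2 μ)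
    (hvar : ∀ n, ∀ᵐ ω ∂μ, μ[fun ω' => h n ω' ^ 2 | m] ω ≤ B)
    (horth : ∀ i j, i ≠ j → μ[fun ω => h i ω * h j ω | m] =ᵐ[μ] 0)
    (hc₂ : 0 ≤ c₂) (hc : c₂ ≤ c₁) (hα₂ : 0 < α₂) (hα : α₂ < α₁) {k : ℕ} (hk : 1 ≤ k)
    (hs : MeasurableSet[m] s) :
    μ.real (blockEvent h c₁ c₂ α₁ α₂ k ∩ s) ≤
      (B * k ^ 2 / (c₂ + α₂ * k ^ 2) ^ 2
        + B * k * (2 * k + 1) / ((c₁ - c₂) + (α₁ - α₂) * k ^ 2) ^ 2) * μ.real s := by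
  have hk2 : (0 : ℝ) < k ^ 2 := by positivity
  have ht₁ : 0 < c₂ + α₂ * k ^ 2 := by nlinarith
  have ht₂ : 0 < (c₁ - c₂) + (α₁ - α₂) * k ^ 2 := by nlinarith
  have hhead := measureReal_sum_le_neg_inter_le hm hL2 hvar horth (range (k ^ 2)) ht₁ hs
  have htail : μ.real ((⋃ i ∈ range (2 * k + 1),
      {ω | ∑ j ∈ Ico (k ^ 2) (k ^ 2 + i), h j ω ≤ -((c₁ - c₂) + (α₁ - α₂) * k ^ 2)}) ∩ s)
      ≤ B * k * (2 * k + 1) / ((c₁ - c₂) + (α₁ - α₂) * k ^ 2) ^ 2 * μ.real s := by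
    rw [Set.iUnion₂_inter]
    refine (measureReal_biUnion_finset_le _ _).trans ?_
    calc _ ≤ ∑ i ∈ range (2 * k + 1),
          (i : ℝ) * B / ((c₁ - c₂) + (α₁ - α₂) * k ^ 2) ^ 2 * μ.real s := by
          gcongr with i
          refine (measureReal_sum_le_neg_inter_le hm hL2 hvar horth _ ht₂ hs).trans_eq ?_
          rw [Nat.card_Ico, Nat.add_sub_cancel_left]
      _ = _ := by
          rw [← sum_mul, ← sum_div, ← sum_mul, sum_range_two_mul_add_one]
          ring
  rw [blockEvent, Set.union_inter_distrib_right, add_mul]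
  refine (measureReal_union_le _ _).trans (add_le_add (hhead.trans_eq ?_) htail)
  rw [card_range]
  push_cast
  ring

lemma ae_condExp_ruinEvent_le (hm : m ≤ mΩ) (hmeas : ∀ n, Measurable (h n))
    (hL2 : ∀ n, MemLp (h n) 2 μ)
    (hvar : ∀ n, ∀ᵐ ω ∂μ, μ[fun ω' => h n ω' ^ 2 | m] ω ≤ B)
    (horth : ∀ i j, i ≠ j → μ[fun ω => h i ω * h j ω | m] =ᵐ[μ] 0)
    (hc₂ : 0 ≤ c₂) (hc : c₂ ≤ c₁) (hα₂ : 0 < α₂) (hα : α₂ < α₁) :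
    ∀ᵐ ω ∂μ, μ[(ruinEvent h c₁ α₁).indicator (fun _ => (1 : ℝ)) | m] ω
      ≤ ruinBound B c₁ c₂ α₁ α₂ := by
  have hx (n : ℕ) : (1 : ℝ) ≤ n + 1 := le_add_of_nonneg_left n.cast_nonneg
  have hhead := summable_div_add_mul_sq_sq (p := fun n => B * ((n : ℝ) + 1) ^ 2) (K := |B|)
    hc₂ hα₂ fun n => by rw [abs_mul, abs_sq]
  have htail := summable_div_add_mul_sq_sq
    (p := fun n => B * ((n : ℝ) + 1) * (2 * ((n : ℝ) + 1) + 1))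
    (sub_nonneg.2 hc) (sub_pos.2 hα) fun n => abs_mul_mul_two_mul_add_one_le (hx n)
  rw [ruinBound, ← hhead.tsum_add htail]
  refine ae_condExp_indicator_le hm (measurableSet_ruinEvent hmeas c₁ α₁) fun s hs =>
    measureReal_inter_le_tsum_mul
      (ruinEvent_subset_iUnion_blockEvent (c₂ := c₂) (α₂ := α₂) (hα₂.trans hα).le)
      (hhead.add htail) fun n => ?_
  simpa using measureReal_blockEvent_inter_le hm hL2 hvar horth hc₂ hc hα₂ hα
    (Nat.le_add_left 1 n) hs

lemma tendsto_ruinBound (B : ℝ) {α : ℝ} (hα : 0 < α) :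
    Tendsto (fun c => ruinBound B c (c / 2) α (α / 2)) atTop (𝓝 0) := by
  have hx (n : ℕ) : (1 : ℝ) ≤ n + 1 := le_add_of_nonneg_left n.cast_nonneg
  have hhead := tendsto_tsum_div_add_mul_sq_sq (p := fun n => B * ((n : ℝ) + 1) ^ 2)
    (K := |B|) (half_pos hα) fun n => by rw [abs_mul, abs_sq]
  have htail := tendsto_tsum_div_add_mul_sq_sq
    (p := fun n => B * ((n : ℝ) + 1) * (2 * ((n : ℝ) + 1) + 1))
    (half_pos hα) fun n => abs_mul_mul_two_mul_add_one_le (hx n)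
  simpa only [ruinBound, sub_half, Function.comp_def, id, add_zero] using
    (hhead.add htail).comp (tendsto_id.atTop_div_const two_pos)

end Ruin

theorem martingale_diff_ruin_estimate_general
    {Ω : Type*} {mΩ : MeasurableSpace Ω} (μ : Measure Ω) [IsProbabilityMeasure μ]
    (ℱ : Filtration ℕ mΩ) (h : ℕ → Ω → ℝ)
    (B : ℝ)
    (hadapt : ∀ n, StronglyMeasurable[ℱ (n + 1)] (h n))
    (hL2 : ∀ n, MemLp (h n) 2 μ)
    (hvarbd : ∀ n, ∀ᵐ ω ∂μ, (μ[fun ω' => (h n ω') ^ 2 | ℱ 0]) ω ≤ B)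
    (horth : ∀ i j, i ≠ j → μ[fun ω => h i ω * h j ω | ℱ 0] =ᵐ[μ] 0)
    (c₁ c₂ α₁ α₂ : ℝ) (hc₂ : 0 ≤ c₂) (hc : c₂ ≤ c₁) (hα₂ : 0 < α₂) (hα : α₂ < α₁) :
    (∀ᵐ ω ∂μ,
      (μ[Set.indicator {ω' | ∃ n : ℕ, 1 ≤ n ∧
            (∑ j ∈ Finset.range n, h j ω') ≤ -c₁ - α₁ * n} (fun _ => (1 : ℝ)) | ℱ 0]) ω
        ≤ (∑' n : ℕ, B * ((n : ℝ) + 1) ^ 2 / (c₂ + α₂ * ((n : ℝ) + 1) ^ 2) ^ 2)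
          + ∑' n : ℕ, B * ((n : ℝ) + 1) * (2 * ((n : ℝ) + 1) + 1)
              / ((c₁ - c₂) + (α₁ - α₂) * ((n : ℝ) + 1) ^ 2) ^ 2) ∧
    (∀ θ : ℝ, 0 < θ → ∃ c : ℝ, 0 ≤ c ∧ ∀ᵐ ω ∂μ,
      (μ[Set.indicator {ω' | ∃ n : ℕ, 1 ≤ n ∧
            (∑ j ∈ Finset.range n, h j ω') ≤ -c - α₁ * n} (fun _ => (1 : ℝ)) | ℱ 0]) ω
        ≤ θ) := by
  have hmeas (n : ℕ) : Measurable (h n) := (hadapt n).measurable.mono (ℱ.le _) le_rfl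
  have hbound := fun c₁ c₂ α₂ => ae_condExp_ruinEvent_le (ℱ.le 0) hmeas hL2 hvarbd horth
    (c₁ := c₁) (c₂ := c₂) (α₁ := α₁) (α₂ := α₂)
  refine ⟨hbound c₁ c₂ α₂ hc₂ hc hα₂ hα, fun θ hθ => ?_⟩
  obtain ⟨c, hcθ, hc⟩ := (((tendsto_order.1 (tendsto_ruinBound B (hα₂.trans hα))).2 θ hθ).and
    (eventually_ge_atTop 0)).exists
  exact ⟨c, hc, (hbound c (c / 2) (α₁ / 2) (by linarith) (by linarith) (by linarith)
    (by linarith)).mono fun ω hω => hω.trans hcθ.le⟩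

/-- For martingale differences `(h_i)_{i ≥ 1}` (here `h n` stands for
`h_{n+1}`, so that it is `ℱ_{n+1}`-measurable with `𝔼[h_{n+1} | ℱ_n] = 0`) with
`𝔼[h_i² | ℱ_0] ≤ B` and `𝔼[h_i h_j | ℱ_0] = 0` for `i ≠ j`, and partial sums
`S_n = ∑_{j=1}^n h_j`, for all `c₁ ≥ c₂ ≥ 0` and `α₁ > α₂ > 0`, almost surely
`ℙ(∃ n ≥ 1 : S_n ≤ -c₁ - α₁ n | ℱ_0)` is bounded by the two explicit series; in
particular for fixed `α₁ > 0` it can be made smaller than any `θ > 0` by choosing `c`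
large. -/
theorem martingale_diff_ruin_estimate
    {Ω : Type*} {mΩ : MeasurableSpace Ω} (μ : Measure Ω) [IsProbabilityMeasure μ]
    (ℱ : Filtration ℕ mΩ) (h : ℕ → Ω → ℝ)
    (B : ℝ) (hB : 0 < B)
    (hadapt : ∀ n, StronglyMeasurable[ℱ (n + 1)] (h n))
    (hL2 : ∀ n, MemLp (h n) 2 μ)
    (hmart : ∀ n, μ[h n | ℱ n] =ᵐ[μ] 0)
    (hvarbd : ∀ n, ∀ᵐ ω ∂μ, (μ[fun ω' => (h n ω') ^ 2 | ℱ 0]) ω ≤ B)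
    (horth : ∀ i j, i ≠ j → μ[fun ω => h i ω * h j ω | ℱ 0] =ᵐ[μ] 0)
    (c₁ c₂ α₁ α₂ : ℝ) (hc₂ : 0 ≤ c₂) (hc : c₂ ≤ c₁) (hα₂ : 0 < α₂) (hα : α₂ < α₁) :
    (∀ᵐ ω ∂μ,
      (μ[Set.indicator {ω' | ∃ n : ℕ, 1 ≤ n ∧
            (∑ j ∈ Finset.range n, h j ω') ≤ -c₁ - α₁ * n} (fun _ => (1 : ℝ)) | ℱ 0]) ω
        ≤ (∑' n : ℕ, B * ((n : ℝ) + 1) ^ 2 / (c₂ + α₂ * ((n : ℝ) + 1) ^ 2) ^ 2)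
          + ∑' n : ℕ, B * ((n : ℝ) + 1) * (2 * ((n : ℝ) + 1) + 1)
              / ((c₁ - c₂) + (α₁ - α₂) * ((n : ℝ) + 1) ^ 2) ^ 2) ∧
    (∀ θ : ℝ, 0 < θ → ∃ c : ℝ, 0 ≤ c ∧ ∀ᵐ ω ∂μ,
      (μ[Set.indicator {ω' | ∃ n : ℕ, 1 ≤ n ∧
            (∑ j ∈ Finset.range n, h j ω') ≤ -c - α₁ * n} (fun _ => (1 : ℝ)) | ℱ 0]) ω
        ≤ θ) :=
  martingale_diff_ruin_estimate_general μ ℱ h B hadapt hL2 hvarbd horth c₁ c₂ α₁ α₂ hc₂ hc hα₂ hα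
end

section
/- Let 𝒱 = {V_1, V_2, …} be a countable set of Volterra quadratic stochastic operators on S^{m-1} with (V_k x)_k = x_k^2 for all x and all k ∈ {1,…,m}, let (ν_j) be a probability distribution on 𝒱 with ν_j > 0 for j ∈ {1,…,m}, let (T_n)_{n≥1} be i.i.d. with ℙ(T_n = V_j) = ν_j, and let X be an int S^{m-1}-valued random variable independent of (T_n) with 𝔼[|log X_i|] < ∞ for all i. Set ℱ_n = σ(X, T_1, …, T_n), Z_n^i = log((T_n ∘ ⋯ ∘ T_1 X)_i), fix d > max{log m, max_{i≤m} (1/ν_i) log 2}, and define Y_0^i = log X_i and Y_{n+1}^i − Y_n^i = max{Z_{n+1}^i − Z_n^i, −d}. Then for every n ≥ 0 and every i ∈ {1,…,m}, ℙ-a.s. on the event {Y_n^i ≤ −d}: 𝔼[Y_{n+1}^i − Y_n^i | ℱ_n] ≤ −ν_i d + log 2 < 0. -/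
/-!
On the event `{Y_n^i ≤ -d}` we also have `Z_n^i ≤ Y_n^i ≤ -d`, since cutting off only increases
the increments. If the next operator is `V_i`, the `i`-th coordinate is squared, so
`Z_{n+1}^i - Z_n^i = Z_n^i ≤ -d` and the cut-off increment is `-d`; otherwise `(V x)_i ≤ 2 x_i`
bounds it by `log 2`. The next operator is independent of `ℱ_n`, so conditionally on `ℱ_n` the
increment is at most `ν_i (-d) + (1 - ν_i) log 2 ≤ -ν_i d + log 2`, which is negative because
`ν_i d > log 2`.
-/

open MeasureTheory ProbabilityTheory Filter

structure IsVolterraCoeff {m : ℕ} (q : Fin m → Fin m → Fin m → ℝ) : Prop where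
  nonneg : ∀ i j l, 0 ≤ q i j l
  sum_eq_one : ∀ i j, ∑ l, q i j l = 1
  eq_zero_of_ne : ∀ i j l, l ≠ i → l ≠ j → q i j l = 0

namespace IsVolterraCoeff

variable {m : ℕ} {q : Fin m → Fin m → Fin m → ℝ} {x : Fin m → ℝ}

lemma diag_eq_one (hq : IsVolterraCoeff q) (k : Fin m) : q k k k = 1 := by
  rw [← hq.sum_eq_one k k, Finset.sum_eq_single k (fun l _ hl => hq.eq_zero_of_ne k k l hl hl)
    (by simp)]

lemma le_one (hq : IsVolterraCoeff q) (i j l : Fin m) : q i j l ≤ 1 :=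
  hq.sum_eq_one i j ▸ Finset.single_le_sum (fun l _ => hq.nonneg i j l) (Finset.mem_univ l)

lemma qsoMap_mem_stdSimplex (hq : IsVolterraCoeff q) (hx : x ∈ stdSimplex ℝ (Fin m)) :
    qsoMap q x ∈ stdSimplex ℝ (Fin m) := by
  refine ⟨fun k => Finset.sum_nonneg fun i _ => Finset.sum_nonneg fun j _ =>
    mul_nonneg (mul_nonneg (hq.nonneg i j k) (hx.1 i)) (hx.1 j), ?_⟩
  calc ∑ k, qsoMap q x k = ∑ i, ∑ j, (∑ k, q i j k) * x i * x j := by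
        simp only [qsoMap, Finset.sum_mul]
        rw [Finset.sum_comm]
        exact Finset.sum_congr rfl fun i _ => Finset.sum_comm
    _ = 1 := by simp [hq.sum_eq_one, ← Finset.mul_sum, hx.2]

lemma sq_le_qsoMap (hq : IsVolterraCoeff q) (hx : ∀ i, 0 ≤ x i) (k : Fin m) :
    x k ^ 2 ≤ qsoMap q x k := by
  have hterm : ∀ i j, 0 ≤ q i j k * x i * x j := fun i j =>
    mul_nonneg (mul_nonneg (hq.nonneg i j k) (hx i)) (hx j)
  calc x k ^ 2 = q k k k * x k * x k := by rw [hq.diag_eq_one]; ring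
    _ ≤ ∑ j, q k j k * x k * x j :=
      Finset.single_le_sum (fun j _ => hterm k j) (Finset.mem_univ k)
    _ ≤ qsoMap q x k :=
      Finset.single_le_sum (f := fun i => ∑ j, q i j k * x i * x j)
        (fun i _ => Finset.sum_nonneg fun j _ => hterm i j) (Finset.mem_univ k)

lemma qsoMap_le_two_mul (hq : IsVolterraCoeff q) (hx : x ∈ stdSimplex ℝ (Fin m)) (k : Fin m) :
    qsoMap q x k ≤ 2 * x k := by
  have hcoeff : ∀ i j, q i j k ≤ (if i = k then 1 else 0) + (if j = k then 1 else 0) := by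
    intro i j
    by_cases hi : i = k
    · subst hi
      rw [if_pos rfl]
      split_ifs <;> linarith [hq.le_one i j i]
    by_cases hj : j = k
    · subst hj
      rw [if_neg hi, if_pos rfl, zero_add]
      exact hq.le_one i j j
    simp [hi, hj, hq.eq_zero_of_ne i j k (Ne.symm hi) (Ne.symm hj)]
  calc qsoMap q x k
      ≤ ∑ i, ∑ j, ((if i = k then 1 else 0) + (if j = k then 1 else 0)) * (x i * x j) := by
        refine Finset.sum_le_sum fun i _ => Finset.sum_le_sum fun j _ => ?_
        rw [mul_assoc]
        exact mul_le_mul_of_nonneg_right (hcoeff i j) (mul_nonneg (hx.1 i) (hx.1 j))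
    _ = 2 * x k := by
        simp [add_mul, ite_mul, Finset.sum_add_distrib, ← Finset.mul_sum, ← Finset.sum_mul, hx.2]
        ring

end IsVolterraCoeff

abbrev historySigma {Ω β γ : Type*} [MeasurableSpace β] [MeasurableSpace γ] (X : Ω → β)
    (ξ : ℕ → Ω → γ) (n : ℕ) : MeasurableSpace Ω :=
  MeasurableSpace.comap X inferInstance ⊔
    ⨆ l ∈ Finset.range n, MeasurableSpace.comap (ξ l) inferInstance

-- `qsoIterate p a x n = V_{a (n-1)} (⋯ (V_{a 0} x))` with `V_j = qsoMap (p j)`, so the paper's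
-- `T_{l+1}` is `V_{ξ l}` and `ℱ_n = historySigma X ξ n` contains `ξ 0, …, ξ (n-1)`.
noncomputable def qsoIterate {m : ℕ} (p : ℕ → Fin m → Fin m → Fin m → ℝ) (a : ℕ → ℕ)
    (x : Fin m → ℝ) (n : ℕ) : Fin m → ℝ :=
  (List.range n).foldl (fun y l => qsoMap (p (a l)) y) x

section qsoIterate

variable {m : ℕ} {p : ℕ → Fin m → Fin m → Fin m → ℝ} {a : ℕ → ℕ} {x : Fin m → ℝ}

lemma qsoIterate_succ (n : ℕ) :
    qsoIterate p a x (n + 1) = qsoMap (p (a n)) (qsoIterate p a x n) := by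
  simp [qsoIterate, List.range_succ]

lemma qsoIterate_mem_stdSimplex (hp : ∀ j, IsVolterraCoeff (p j))
    (hx : x ∈ stdSimplex ℝ (Fin m)) (n : ℕ) : qsoIterate p a x n ∈ stdSimplex ℝ (Fin m) := by
  induction n with
  | zero => exact hx
  | succ n ih => exact qsoIterate_succ (x := x) n ▸ (hp (a n)).qsoMap_mem_stdSimplex ih

lemma qsoIterate_pos (hp : ∀ j, IsVolterraCoeff (p j)) (hx : x ∈ stdSimplex ℝ (Fin m))
    (hpos : ∀ k, 0 < x k) (n : ℕ) (k : Fin m) : 0 < qsoIterate p a x n k := by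
  induction n generalizing k with
  | zero => exact hpos k
  | succ n ih =>
    rw [qsoIterate_succ]
    exact (pow_pos (ih k) 2).trans_le
      ((hp (a n)).sq_le_qsoMap (qsoIterate_mem_stdSimplex hp hx n).1 k)

lemma log_qsoIterate_succ_sub_le (hp : ∀ j, IsVolterraCoeff (p j))
    (hx : x ∈ stdSimplex ℝ (Fin m)) (hpos : ∀ k, 0 < x k) (n : ℕ) (k : Fin m) :
    Real.log (qsoIterate p a x (n + 1) k) - Real.log (qsoIterate p a x n k) ≤ Real.log 2 := by
  have hn := qsoIterate_pos (a := a) hp hx hpos n k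
  rw [sub_le_iff_le_add, ← Real.log_mul two_ne_zero hn.ne']
  refine Real.log_le_log (qsoIterate_pos hp hx hpos (n + 1) k) ?_
  rw [qsoIterate_succ]
  exact (hp (a n)).qsoMap_le_two_mul (qsoIterate_mem_stdSimplex hp hx n) k

lemma log_qsoIterate_succ_of_sq (hp : ∀ j, IsVolterraCoeff (p j))
    (hx : x ∈ stdSimplex ℝ (Fin m)) {n : ℕ} {k : Fin m}
    (hsq : ∀ y ∈ stdSimplex ℝ (Fin m), qsoMap (p (a n)) y k = y k ^ 2) :
    Real.log (qsoIterate p a x (n + 1) k) = 2 * Real.log (qsoIterate p a x n k) := by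
  rw [qsoIterate_succ, hsq _ (qsoIterate_mem_stdSimplex hp hx n), Real.log_pow]
  norm_num

lemma measurable_qsoIterate {Ω : Type*} {m' : MeasurableSpace Ω} {ξ : ℕ → Ω → ℕ}
    {X : Ω → Fin m → ℝ} {n : ℕ} (hX : Measurable[m'] X) (hξ : ∀ l < n, Measurable[m'] (ξ l)) :
    Measurable[m'] fun ω => qsoIterate p (fun l => ξ l ω) (X ω) n := by
  induction n with
  | zero => exact hX
  | succ n ih =>
    have hmap : Measurable fun z : (Fin m → ℝ) × ℕ => qsoMap (p z.2) z.1 :=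
      measurable_from_prod_countable_left fun _ =>
        Continuous.measurable (by unfold qsoMap; fun_prop)
    simp only [qsoIterate_succ]
    exact hmap.comp ((ih fun l hl => hξ l (hl.trans n.lt_succ_self)).prodMk (hξ n n.lt_succ_self))

lemma measurable_qsoIterate_historySigma {Ω : Type*} {ξ : ℕ → Ω → ℕ} {X : Ω → Fin m → ℝ} {k n : ℕ}
    (hk : k ≤ n) :
    Measurable[historySigma X ξ n] fun ω => qsoIterate p (fun l => ξ l ω) (X ω) k := by
  refine measurable_qsoIterate (Measurable.of_comap_le le_sup_left) fun l hl =>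
    Measurable.of_comap_le (le_sup_of_le_right ?_)
  exact le_iSup₂_of_le (f := fun l (_ : l ∈ Finset.range n) =>
    MeasurableSpace.comap (ξ l) inferInstance) l (Finset.mem_range.2 (hl.trans_le hk)) le_rfl

end qsoIterate

lemma le_of_cutoff_increments {z y : ℕ → ℝ} {c : ℝ} (h₀ : z 0 ≤ y 0)
    (hy : ∀ k, y (k + 1) = y k + max (z (k + 1) - z k) c) (n : ℕ) : z n ≤ y n := by
  induction n with
  | zero => exact h₀
  | succ n ih => linarith [hy n, le_max_left (z (n + 1) - z n) c]

lemma measurable_of_cutoff_increments {Ω : Type*} {m' : MeasurableSpace Ω} {z y : ℕ → Ω → ℝ}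
    {c : ℝ} {n : ℕ} (h₀ : Measurable[m'] (y 0)) (hz : ∀ k ≤ n, Measurable[m'] (z k))
    (hy : ∀ k ω, y (k + 1) ω = y k ω + max (z (k + 1) ω - z k ω) c) : Measurable[m'] (y n) := by
  induction n with
  | zero => exact h₀
  | succ n ih =>
    rw [show y (n + 1) = fun ω => y n ω + max (z (n + 1) ω - z n ω) c from funext (hy n)]
    exact (ih fun k hk => hz k (hk.trans n.le_succ)).add
      (((hz _ le_rfl).sub (hz n n.le_succ)).max measurable_const)

section cutoff

variable {m : ℕ} {p : ℕ → Fin m → Fin m → Fin m → ℝ} {a : ℕ → ℕ} {x : Fin m → ℝ} {i : Fin m}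
  {d : ℝ} {y : ℕ → ℝ}

lemma cutoff_log_increment_mem_Icc (hp : ∀ j, IsVolterraCoeff (p j))
    (hx : x ∈ stdSimplex ℝ (Fin m)) (hpos : ∀ k, 0 < x k) (hd : -d ≤ Real.log 2)
    (hy : ∀ k, y (k + 1) = y k + max (Real.log (qsoIterate p a x (k + 1) i) -
      Real.log (qsoIterate p a x k i)) (-d)) (n : ℕ) :
    y (n + 1) - y n ∈ Set.Icc (-d) (Real.log 2) := by
  rw [hy n, add_sub_cancel_left]
  exact ⟨le_max_right _ _, max_le (log_qsoIterate_succ_sub_le hp hx hpos n i) hd⟩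

lemma cutoff_log_increment_le (hp : ∀ j, IsVolterraCoeff (p j))
    (hx : x ∈ stdSimplex ℝ (Fin m)) (hpos : ∀ k, 0 < x k)
    (hsq : ∀ z ∈ stdSimplex ℝ (Fin m), qsoMap (p i) z i = z i ^ 2) (hd : -d ≤ Real.log 2)
    (hy₀ : y 0 = Real.log (x i))
    (hy : ∀ k, y (k + 1) = y k + max (Real.log (qsoIterate p a x (k + 1) i) -
      Real.log (qsoIterate p a x k i)) (-d))
    {n : ℕ} (hn : y n ≤ -d) :
    y (n + 1) - y n ≤ if a n = i then -d else Real.log 2 := by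
  split_ifs with han
  · have hz := le_of_cutoff_increments (z := fun k => Real.log (qsoIterate p a x k i)) hy₀.ge hy n
    rw [hy n, add_sub_cancel_left, log_qsoIterate_succ_of_sq hp hx (han ▸ hsq)]
    exact max_le (by linarith) le_rfl
  · exact (cutoff_log_increment_mem_Icc hp hx hpos hd hy n).2

lemma measurable_cutoff_log_historySigma {Ω : Type*} {ξ : ℕ → Ω → ℕ} {X : Ω → Fin m → ℝ}
    {y : ℕ → Ω → ℝ} (hy₀ : ∀ ω, y 0 ω = Real.log (X ω i))
    (hy : ∀ k ω, y (k + 1) ω = y k ω + max (Real.log (qsoIterate p (ξ · ω) (X ω) (k + 1) i) -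
      Real.log (qsoIterate p (ξ · ω) (X ω) k i)) (-d)) (n : ℕ) :
    Measurable[historySigma X ξ n] (y n) := by
  refine measurable_of_cutoff_increments
    (z := fun k ω => Real.log (qsoIterate p (ξ · ω) (X ω) k i)) ?_ (fun k hk => ?_) hy
  · rw [funext hy₀]
    exact Real.measurable_log.comp
      ((measurable_pi_apply i).comp (measurable_qsoIterate_historySigma (p := p) n.zero_le))
  · exact Real.measurable_log.comp ((measurable_pi_apply i).comp (measurable_qsoIterate_historySigma hk))

end cutoff

section Probability

variable {Ω : Type*} {mΩ : MeasurableSpace Ω} {μ : Measure Ω}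

lemma indep_sup_of_indep_of_le [IsZeroOrProbabilityMeasure μ] {m₁ m₂ m₃ m : MeasurableSpace Ω}
    (h₁ : m₁ ≤ m) (h₃ : m₃ ≤ m) (hm : m ≤ mΩ) (h₂ : m₂ ≤ mΩ)
    (h₁₃ : Indep m₁ m₃ μ) (h₂m : Indep m₂ m μ) : Indep m₁ (m₂ ⊔ m₃) μ := by
  let p := Set.image2 (· ∩ ·) {s | MeasurableSet[m₂] s} {s | MeasurableSet[m₃] s}
  have hp : IsPiSystem p := by
    rintro _ ⟨a, ha, c, hc, rfl⟩ _ ⟨a', ha', c', hc', rfl⟩ -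
    exact ⟨a ∩ a', ha.inter ha', c ∩ c', hc.inter hc', Set.inter_inter_inter_comm a a' c c'⟩
  have hgen : m₂ ⊔ m₃ = MeasurableSpace.generateFrom p := by
    refine le_antisymm (sup_le ?_ ?_) (MeasurableSpace.generateFrom_le ?_)
    · exact fun a ha => MeasurableSpace.measurableSet_generateFrom
        ⟨a, ha, Set.univ, MeasurableSet.univ, Set.inter_univ a⟩
    · exact fun c hc => MeasurableSpace.measurableSet_generateFrom
        ⟨Set.univ, MeasurableSet.univ, c, hc, Set.univ_inter c⟩
    · rintro _ ⟨a, ha, c, hc, rfl⟩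
      exact (le_sup_left (b := m₃) a ha).inter (le_sup_right (a := m₂) c hc)
  refine IndepSets.indep (h₁.trans hm) (sup_le h₂ (h₃.trans hm))
    (@MeasurableSpace.isPiSystem_measurableSet Ω m₁) hp
    (@MeasurableSpace.generateFrom_measurableSet Ω m₁).symm hgen ?_
  rw [IndepSets_iff]
  rintro b _ hb ⟨a, ha, c, hc, rfl⟩
  have h₂m' := (Indep_iff _ _ _).1 h₂m
  calc μ (b ∩ (a ∩ c)) = μ (a ∩ (b ∩ c)) := by rw [Set.inter_left_comm]
    _ = μ a * (μ b * μ c) := by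
      rw [h₂m' a _ ha ((h₁ b hb).inter (h₃ c hc)), (Indep_iff _ _ _).1 h₁₃ b c hb hc]
    _ = μ b * μ (a ∩ c) := by rw [h₂m' a c ha (h₃ c hc)]; ring

lemma iIndepFun.indep_comap_historySigma [IsProbabilityMeasure μ] {β γ : Type*}
    [MeasurableSpace β] [MeasurableSpace γ] {ξ : ℕ → Ω → γ} {X : Ω → β}
    (hξ : ∀ n, Measurable (ξ n)) (hX : Measurable X) (hindep : iIndepFun ξ μ)
    (hXξ : IndepFun X (fun ω n => ξ n ω) μ) (n : ℕ) :
    Indep (MeasurableSpace.comap (ξ n) inferInstance) (historySigma X ξ n) μ := by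
  have hle : ∀ l, MeasurableSpace.comap (ξ l) inferInstance ≤ mΩ := fun l => (hξ l).comap_le
  have hpi : MeasurableSpace.comap (fun ω l => ξ l ω) MeasurableSpace.pi =
      ⨆ l, MeasurableSpace.comap (ξ l) inferInstance := by
    simp_rw [MeasurableSpace.pi, MeasurableSpace.comap_iSup, MeasurableSpace.comap_comp]
    rfl
  have hpast := indep_iSup_of_disjoint hle hindep (S := {n}) (T := ↑(Finset.range n)) (by simp)
  simp only [Set.mem_singleton_iff, iSup_iSup_eq_left, Finset.mem_coe] at hpast
  exact indep_sup_of_indep_of_le (le_iSup (fun l => MeasurableSpace.comap (ξ l) _) n)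
    (iSup₂_le fun l _ => le_iSup (fun l => MeasurableSpace.comap (ξ l) _) l) (iSup_le hle)
    hX.comap_le hpast (hpi ▸ hXξ)

lemma ae_condExp_le_integral_of_indep [IsFiniteMeasure μ] {m mh : MeasurableSpace Ω}
    (hm : m ≤ mΩ) (hmh : mh ≤ mΩ) {g h : Ω → ℝ} {A : Set Ω} (hA : MeasurableSet[m] A)
    (hg : Integrable g μ) (hh : Integrable h μ) (hh_meas : StronglyMeasurable[mh] h)
    (hind : Indep mh m μ) (hgh : ∀ ω ∈ A, g ω ≤ h ω) :
    ∀ᵐ ω ∂μ, ω ∈ A → μ[g|m] ω ≤ ∫ ω, h ω ∂μ := by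
  have hmono : μ[A.indicator g|m] ≤ᵐ[μ] μ[A.indicator h|m] := by
    refine condExp_mono (hg.indicator (hm A hA)) (hh.indicator (hm A hA)) (ae_of_all _ fun ω => ?_)
    by_cases hω : ω ∈ A <;> simp [hω, hgh]
  filter_upwards [hmono, condExp_indicator hg hA, condExp_indicator hh hA,
    condExp_indep_eq hmh hm hh_meas hind] with ω hmono hgA hhA hhind hω
  calc μ[g|m] ω = μ[A.indicator g|m] ω := by rw [hgA, Set.indicator_of_mem hω]
    _ ≤ μ[A.indicator h|m] ω := hmono
    _ = ∫ ω, h ω ∂μ := by rw [hhA, Set.indicator_of_mem hω, hhind]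

lemma ite_const_eq_add_indicator {α M : Type*} [AddCommGroup M] (P : α → Prop)
    [DecidablePred P] (a b : M) :
    (fun x => if P x then a else b) = fun x => b + {x | P x}.indicator (fun _ => a - b) x := by
  funext x
  by_cases h : P x <;> simp [h]

lemma integrable_ite_const [IsFiniteMeasure μ] {P : Ω → Prop} [DecidablePred P]
    (hP : MeasurableSet {ω | P ω}) (a b : ℝ) : Integrable (fun ω => if P ω then a else b) μ := by
  rw [ite_const_eq_add_indicator]
  exact (integrable_const b).add ((integrable_const (a - b)).indicator hP)

lemma integral_ite_const [IsProbabilityMeasure μ] {P : Ω → Prop} [DecidablePred P]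
    (hP : MeasurableSet {ω | P ω}) (a b : ℝ) :
    ∫ ω, (if P ω then a else b) ∂μ = μ.real {ω | P ω} * a + (1 - μ.real {ω | P ω}) * b := by
  rw [ite_const_eq_add_indicator, integral_add (integrable_const _)
    ((integrable_const _).indicator hP), integral_const, integral_indicator_const _ hP]
  simp only [probReal_univ, smul_eq_mul]
  ring

end Probability

theorem cutoff_log_process_drift_general
    {Ω : Type*} {mΩ : MeasurableSpace Ω} (μ : Measure Ω) [IsProbabilityMeasure μ]
    (m : ℕ)
    (p : ℕ → Fin m → Fin m → Fin m → ℝ)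
    (hnonneg : ∀ n i j l, 0 ≤ p n i j l)
    (hsum : ∀ n i j, ∑ l, p n i j l = 1)
    (hvol : ∀ n i j l, l ≠ i → l ≠ j → p n i j l = 0)
    (hsq : ∀ k : Fin m, ∀ x ∈ stdSimplex ℝ (Fin m), qsoMap (p (k : ℕ)) x k = x k ^ 2)
    (ν : ℕ → ℝ)
    (hνpos : ∀ k : Fin m, 0 < ν (k : ℕ))
    (ξ : ℕ → Ω → ℕ) (hξmeas : ∀ n, Measurable (ξ n))
    (hindep : iIndepFun ξ μ)
    (hlaw : ∀ n j, μ {ω | ξ n ω = j} = ENNReal.ofReal (ν j))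
    (X : Ω → Fin m → ℝ) (hXmeas : Measurable X)
    (hXsimplex : ∀ ω, X ω ∈ stdSimplex ℝ (Fin m) ∧ ∀ i, 0 < X ω i)
    (hXindep : IndepFun X (fun ω (n : ℕ) => ξ n ω) μ)
    (d : ℝ) (hd₂ : ∀ i : Fin m, (1 / ν (i : ℕ)) * Real.log 2 < d)
    (F : ℕ → MeasurableSpace Ω)
    (hF : ∀ n, F n = MeasurableSpace.comap X inferInstance ⊔
        ⨆ l ∈ Finset.range n, MeasurableSpace.comap (ξ l) inferInstance)
    (Z : ℕ → Fin m → Ω → ℝ)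
    (hZ : ∀ n i ω, Z n i ω =
      Real.log (((List.range n).foldl (fun y l => qsoMap (p (ξ l ω)) y) (X ω)) i))
    (Y : ℕ → Fin m → Ω → ℝ)
    (hY0 : ∀ i ω, Y 0 i ω = Real.log (X ω i))
    (hYstep : ∀ n i ω, Y (n + 1) i ω = Y n i ω + max (Z (n + 1) i ω - Z n i ω) (-d)) :
    ∀ (n : ℕ) (i : Fin m),
      (-ν (i : ℕ) * d + Real.log 2 < 0) ∧
      (∀ᵐ ω ∂μ, Y n i ω ≤ -d →
        (μ[fun ω' => Y (n + 1) i ω' - Y n i ω' | F n]) ω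
          ≤ -ν (i : ℕ) * d + Real.log 2) := by
  intro n i
  have hp : ∀ j, IsVolterraCoeff (p j) := fun j => ⟨hnonneg j, hsum j, hvol j⟩
  have hνd : Real.log 2 < ν i * d := by
    have := hd₂ i
    rwa [one_div, inv_mul_lt_iff₀ (hνpos i)] at this
  have hlog2 : 0 < Real.log 2 := Real.log_pos one_lt_two
  have hd : -d ≤ Real.log 2 := by
    linarith [pos_of_mul_pos_right (hlog2.trans hνd) (hνpos i).le]
  refine ⟨by linarith, ?_⟩
  have hY : ∀ k ω, Y (k + 1) i ω = Y k i ω + max (Real.log (qsoIterate p (ξ · ω) (X ω) (k + 1) i)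
      - Real.log (qsoIterate p (ξ · ω) (X ω) k i)) (-d) := fun k ω =>
    hZ k i ω ▸ hZ (k + 1) i ω ▸ hYstep k i ω
  have hFle : ∀ k, F k ≤ mΩ := fun k =>
    hF k ▸ sup_le hXmeas.comap_le (iSup₂_le fun l _ => (hξmeas l).comap_le)
  have hYmeas : ∀ k, Measurable[F k] (Y k i) := fun k => by
    rw [hF]
    exact measurable_cutoff_log_historySigma (y := fun k => Y k i) (hY0 i) hY k
  have hincr : Integrable (fun ω => Y (n + 1) i ω - Y n i ω) μ :=
    .of_mem_Icc (-d) (Real.log 2)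
      (((hYmeas (n + 1)).mono (hFle _) le_rfl).sub ((hYmeas n).mono (hFle n) le_rfl)).aemeasurable
      (ae_of_all _ fun ω => cutoff_log_increment_mem_Icc (y := fun k => Y k i ω) hp
        (hXsimplex ω).1 (hXsimplex ω).2 hd (hY · ω) n)
  have hξi : MeasurableSet {ω | ξ n ω = i} := hξmeas n (measurableSet_singleton _)
  have hν : μ.real {ω | ξ n ω = i} = ν i := by
    rw [measureReal_def, hlaw, ENNReal.toReal_ofReal (hνpos i).le]
  filter_upwards [ae_condExp_le_integral_of_indep (hFle n) (hξmeas n).comap_le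
    (measurableSet_le (hYmeas n) measurable_const) hincr (integrable_ite_const hξi _ _)
    ((measurable_from_top (f := fun j : ℕ => if j = i then -d else Real.log 2)).comp
      (comap_measurable (ξ n))).stronglyMeasurable
    (hF n ▸ iIndepFun.indep_comap_historySigma hξmeas hXmeas hindep hXindep n)
    fun ω => cutoff_log_increment_le (y := fun k => Y k i ω) hp (hXsimplex ω).1 (hXsimplex ω).2
      (hsq i) hd (hY0 i ω) (hY · ω)] with ω hω hA
  calc _ ≤ _ := hω hA
    _ = ν i * -d + (1 - ν i) * Real.log 2 := by rw [integral_ite_const hξi, hν]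
    _ ≤ -ν i * d + Real.log 2 := by nlinarith [hνpos i]

/-- For the cut-off log-coordinate process `Y_n^i` of the random iteration
of Volterra QSOs (with `(V_k x)_k = x_k^2` for `k < m`, i.i.d. choices `T_n = V_{ξ_n}`
with law `ν`, initial value `X` in the interior of the simplex independent of the
choices, and cut-off level `d > max{log m, max_i (1/ν_i) log 2}`), one has, a.s. on the
event `{Y_n^i ≤ -d}`: `𝔼[Y_{n+1}^i - Y_n^i | ℱ_n] ≤ -ν_i d + log 2 < 0`. -/
theorem cutoff_log_process_drift
    {Ω : Type*} {mΩ : MeasurableSpace Ω} (μ : Measure Ω) [IsProbabilityMeasure μ]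
    (m : ℕ) (hm : 2 ≤ m)
    (p : ℕ → Fin m → Fin m → Fin m → ℝ)
    (hsymm : ∀ n i j l, p n i j l = p n j i l)
    (hnonneg : ∀ n i j l, 0 ≤ p n i j l)
    (hsum : ∀ n i j, ∑ l, p n i j l = 1)
    (hvol : ∀ n i j l, l ≠ i → l ≠ j → p n i j l = 0)
    (hsq : ∀ k : Fin m, ∀ x ∈ stdSimplex ℝ (Fin m), qsoMap (p (k : ℕ)) x k = x k ^ 2)
    (ν : ℕ → ℝ) (hν0 : ∀ j, 0 ≤ ν j) (hν1 : ∑' j, ν j = 1)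
    (hνpos : ∀ k : Fin m, 0 < ν (k : ℕ))
    (ξ : ℕ → Ω → ℕ) (hξmeas : ∀ n, Measurable (ξ n))
    (hindep : iIndepFun ξ μ)
    (hlaw : ∀ n j, μ {ω | ξ n ω = j} = ENNReal.ofReal (ν j))
    (X : Ω → Fin m → ℝ) (hXmeas : Measurable X)
    (hXsimplex : ∀ ω, X ω ∈ stdSimplex ℝ (Fin m) ∧ ∀ i, 0 < X ω i)
    (hXlog : ∀ i : Fin m, Integrable (fun ω => |Real.log (X ω i)|) μ)
    (hXindep : IndepFun X (fun ω (n : ℕ) => ξ n ω) μ)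
    (d : ℝ) (hd₁ : Real.log m < d) (hd₂ : ∀ i : Fin m, (1 / ν (i : ℕ)) * Real.log 2 < d)
    (F : ℕ → MeasurableSpace Ω)
    (hF : ∀ n, F n = MeasurableSpace.comap X inferInstance ⊔
        ⨆ l ∈ Finset.range n, MeasurableSpace.comap (ξ l) inferInstance)
    (Z : ℕ → Fin m → Ω → ℝ)
    (hZ : ∀ n i ω, Z n i ω =
      Real.log (((List.range n).foldl (fun y l => qsoMap (p (ξ l ω)) y) (X ω)) i))
    (Y : ℕ → Fin m → Ω → ℝ)
    (hY0 : ∀ i ω, Y 0 i ω = Real.log (X ω i))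
    (hYstep : ∀ n i ω, Y (n + 1) i ω = Y n i ω + max (Z (n + 1) i ω - Z n i ω) (-d)) :
    ∀ (n : ℕ) (i : Fin m),
      (-ν (i : ℕ) * d + Real.log 2 < 0) ∧
      (∀ᵐ ω ∂μ, Y n i ω ≤ -d →
        (μ[fun ω' => Y (n + 1) i ω' - Y n i ω' | F n]) ω
          ≤ -ν (i : ℕ) * d + Real.log 2) :=
  cutoff_log_process_drift_general (mΩ := mΩ) μ m p hnonneg hsum hvol hsq ν hνpos ξ hξmeas hindep
    hlaw X hXmeas hXsimplex hXindep d hd₂ F hF Z hZ Y hY0 hYstep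
end

section
/- In the setting of the cut-off log-coordinate process with D := min_{i≤m} {ν_i d − log 2} > 0: for every j ∈ {1,…,m}, ℙ(liminf_{n→∞} −(1/n) Y_n^i ≥ D for all i ≠ j | Y_n^i ≤ −d for all i ≠ j and all n ∈ ℕ) = 1 (provided the conditioning event has positive probability). Moreover, for every θ > 0 and every b ∈ ℝ there exists s > 0 such that ℙ(∃ j ∈ {1,…,m} : Y_n^i < b for all i ≠ j and all n ∈ ℕ | ℱ_0) ≥ 1 − θ holds ℙ-a.s. on the event {X ∈ Ū_s}, where Ū_s := {x ∈ S^{m-1} : ∃ j ∀ i ≠ j : x_i ≤ s}. -/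
open MeasureTheory ProbabilityTheory Filter

/-!
Along the orbit a coordinate at most doubles in one step (`V x_k ≤ 2 x_k` for Volterra
operators), while an application of `V_i` squares `x_i`. Hence, once the cut-off log-coordinate
`Y^i` is below `-d`, its next step is at most `stepBound d i (ξ n)`: exactly `-d` when `V_i` is
drawn (probability `ν_i`) and at most `log 2` otherwise. By the strong law of large numbers this
dominating walk has drift `log 2 - (d + log 2) ν_i ≤ -(ν_i d - log 2) < 0`, which gives the
liminf bound on `{Y^i ≤ -d for all n ≥ 1}`. The negative drift also makes the supremum of the walk
a.s. finite; since the walk depends only on `(ξ_n)`, which is independent of `X`, all but one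
coordinate starting below a small enough `s` stay below `b` forever with conditional probability
at least `1 - θ`.
-/

open Topology Finset Real

section Volterra

variable {m : ℕ}

structure IsVolterra_s14 (p : Fin m → Fin m → Fin m → ℝ) : Prop where
  nonneg : ∀ i j k, 0 ≤ p i j k
  sum_eq_one : ∀ i j, ∑ k, p i j k = 1
  eq_zero_of_ne : ∀ i j k, k ≠ i → k ≠ j → p i j k = 0

variable {p : Fin m → Fin m → Fin m → ℝ} {x : Fin m → ℝ}

theorem IsVolterra_s14.le_one (hp : IsVolterra_s14 p) (i j k : Fin m) : p i j k ≤ 1 :=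
  hp.sum_eq_one i j ▸ single_le_sum (fun l _ => hp.nonneg i j l) (mem_univ k)

theorem IsVolterra_s14.diag_eq_one (hp : IsVolterra_s14 p) (k : Fin m) : p k k k = 1 := by
  rw [← hp.sum_eq_one k k,
    sum_eq_single k (fun l _ hl => hp.eq_zero_of_ne k k l hl hl) (by simp)]

theorem IsVolterra_s14.le_ite_add_ite (hp : IsVolterra_s14 p) (i j k : Fin m) :
    p i j k ≤ (if k = i then 1 else 0) + (if k = j then 1 else 0) := by
  split_ifs with hi hj hj <;>
    first | linarith [hp.le_one i j k] | simp [hp.eq_zero_of_ne i j k hi hj]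

theorem IsVolterra_s14.sq_le_qsoMap (hp : IsVolterra_s14 p) (hx : ∀ i, 0 ≤ x i) (k : Fin m) :
    x k ^ 2 ≤ qsoMap p x k := by
  have hterm : ∀ i j, 0 ≤ p i j k * x i * x j := fun i j =>
    mul_nonneg (mul_nonneg (hp.nonneg i j k) (hx i)) (hx j)
  calc x k ^ 2 = p k k k * x k * x k := by rw [hp.diag_eq_one]; ring
    _ ≤ ∑ j, p k j k * x k * x j := single_le_sum (fun j _ => hterm k j) (mem_univ k)
    _ ≤ qsoMap p x k :=
      single_le_sum (f := fun i => ∑ j, p i j k * x i * x j)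
        (fun i _ => sum_nonneg fun j _ => hterm i j) (mem_univ k)

theorem IsVolterra_s14.sum_qsoMap (hp : IsVolterra_s14 p) (hx : ∑ i, x i = 1) :
    ∑ k, qsoMap p x k = 1 := by
  calc ∑ k, qsoMap p x k = ∑ i, ∑ j, (∑ k, p i j k) * x i * x j := by
        simp only [qsoMap, sum_mul]
        rw [sum_comm]
        exact sum_congr rfl fun i _ => sum_comm
    _ = (∑ i, x i) * ∑ j, x j := by simp [hp.sum_eq_one, sum_mul_sum]
    _ = 1 := by rw [hx, one_mul]

theorem IsVolterra_s14.qsoMap_le_two_mul (hp : IsVolterra_s14 p) (hx₀ : ∀ i, 0 ≤ x i)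
    (hx : ∑ i, x i = 1) (k : Fin m) : qsoMap p x k ≤ 2 * x k := by
  calc qsoMap p x k
      ≤ ∑ i, ∑ j, ((if k = i then 1 else 0) + (if k = j then 1 else 0)) * x i * x j :=
        sum_le_sum fun i _ => sum_le_sum fun j _ => by
          have := hp.le_ite_add_ite i j k
          gcongr <;> simp [hx₀]
    _ = 2 * x k := by
        simp only [add_mul, ite_mul, one_mul, zero_mul, sum_add_distrib, sum_ite_irrel,
          ← mul_sum, hx, mul_one, sum_const_zero, sum_ite_eq, mem_univ, ↓reduceIte, ← sum_mul]
        ring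

theorem IsVolterra_s14.qsoMap_mem_stdSimplex (hp : IsVolterra_s14 p)
    (hx : x ∈ stdSimplex ℝ (Fin m) ∧ ∀ i, 0 < x i) :
    qsoMap p x ∈ stdSimplex ℝ (Fin m) ∧ ∀ i, 0 < qsoMap p x i := by
  have hpos : ∀ i, 0 < qsoMap p x i := fun i =>
    (pow_pos (hx.2 i) 2).trans_le (hp.sq_le_qsoMap (fun j => (hx.2 j).le) i)
  exact ⟨⟨fun i => (hpos i).le, hp.sum_qsoMap hx.1.2⟩, hpos⟩

end Volterra

/-- Increment of the random walk that dominates the `i`-th cut-off log-coordinate below `-d`. -/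
noncomputable def stepBound (d : ℝ) (i t : ℕ) : ℝ := if t = i then -d else log 2

section Cutoff

variable {z y : ℕ → ℝ} {d : ℝ}

theorem le_cutoff (hy0 : y 0 = z 0) (hy : ∀ n, y (n + 1) = y n + max (z (n + 1) - z n) (-d))
    (n : ℕ) : z n ≤ y n := by
  induction n with
  | zero => exact hy0.ge
  | succ n ih => rw [hy]; linarith [le_max_left (z (n + 1) - z n) (-d)]

theorem cutoff_succ_le_add_stepBound (hy0 : y 0 = z 0)
    (hy : ∀ n, y (n + 1) = y n + max (z (n + 1) - z n) (-d)) (hd : -d ≤ log 2)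
    (hz : ∀ n, z (n + 1) - z n ≤ log 2) {t : ℕ → ℕ} {i : ℕ}
    (hzi : ∀ n, t n = i → z (n + 1) = 2 * z n) {n : ℕ} (hyn : y n ≤ -d) :
    y (n + 1) ≤ y n + stepBound d i (t n) := by
  rw [hy, stepBound]
  gcongr
  split_ifs with hn
  · -- the increment is `z n ≤ y n ≤ -d`, so the cut-off is active
    have := le_cutoff hy0 hy n
    exact max_le (by linarith [hzi n hn]) le_rfl
  · exact max_le (hz n) hd

theorem measurable_cutoff {Ω : Type*} [MeasurableSpace Ω] {z y : ℕ → Ω → ℝ}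
    (hz : ∀ n, Measurable (z n)) (hy0 : y 0 = z 0)
    (hy : ∀ n, y (n + 1) = fun ω => y n ω + max (z (n + 1) ω - z n ω) (-d)) (n : ℕ) :
    Measurable (y n) := by
  induction n with
  | zero => exact hy0 ▸ hz 0
  | succ n ih => rw [hy]; exact ih.add (((hz _).sub (hz n)).max measurable_const)

end Cutoff

section Walk

variable {y c : ℕ → ℝ}

theorem le_add_sum_Ico_of_succ_le {a : ℕ} (h : ∀ n ≥ a, y (n + 1) ≤ y n + c n) {n : ℕ}
    (hn : a ≤ n) : y n ≤ y a + ∑ k ∈ Ico a n, c k := by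
  induction n, hn using Nat.le_induction with
  | base => simp
  | succ n hn ih => rw [sum_Ico_succ_top hn]; linarith [h n hn]

theorem le_add_sum_of_trapped {a d : ℝ} (h : ∀ n, y n ≤ -d → y (n + 1) ≤ y n + c n)
    (h0 : y 0 ≤ a) (ha : ∀ n, a + ∑ k ∈ range n, c k ≤ -d) (n : ℕ) :
    y n ≤ a + ∑ k ∈ range n, c k := by
  induction n with
  | zero => simpa
  | succ n ih => rw [sum_range_succ]; linarith [h n (ih.trans (ha n))]

theorem tendsto_add_div_of_tendsto_div {s : ℕ → ℝ} {L : ℝ}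
    (h : Tendsto (fun n => s n / n) atTop (𝓝 L)) (a : ℝ) :
    Tendsto (fun n => (a + s n) / n) atTop (𝓝 L) := by
  simpa [add_div] using (tendsto_const_div_atTop_nhds_zero_nat a).add h

theorem bddAbove_range_of_tendsto_div_neg {s : ℕ → ℝ} {L : ℝ}
    (h : Tendsto (fun n => s n / n) atTop (𝓝 L)) (hL : L < 0) : BddAbove (Set.range s) := by
  refine IsBoundedUnder.bddAbove_range ⟨0, eventually_map.2 ?_⟩
  filter_upwards [h.eventually_lt_const hL, eventually_gt_atTop 0] with n hn hpos
  simpa using ((div_lt_iff₀ (Nat.cast_pos.2 hpos)).1 hn).le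

theorem neg_le_liminf_neg_div {d L : ℝ} (hstep : ∀ n ≥ 1, y (n + 1) ≤ y n + c n)
    (hlow : ∀ n, y n - d ≤ y (n + 1))
    (hc : Tendsto (fun n => (∑ k ∈ range n, c k) / n) atTop (𝓝 L)) :
    -L ≤ liminf (fun n : ℕ => -y n / n) atTop := by
  have hup : ∀ n ≥ 1, y n ≤ (y 1 - c 0) + ∑ k ∈ range n, c k := fun n hn => by
    have := le_add_sum_Ico_of_succ_le hstep hn
    rw [sum_Ico_eq_sub _ hn, sum_range_one] at this
    linarith
  have hdown : ∀ n : ℕ, y 0 - n * d ≤ y n := fun n => by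
    have := le_add_sum_Ico_of_succ_le (y := -y) (c := fun _ => d) (a := 0)
      (fun n _ => by simp only [Pi.neg_apply]; linarith [hlow n]) n.zero_le
    simp only [Pi.neg_apply, sum_const, Nat.card_Ico, Nat.sub_zero, nsmul_eq_mul] at this
    linarith
  have hcobdd : IsCoboundedUnder (· ≥ ·) atTop (fun n : ℕ => -y n / n) := by
    refine isCoboundedUnder_ge_of_eventually_le atTop (x := |y 0| + d) ?_
    filter_upwards [eventually_ge_atTop 1] with n hn
    have hn' : (1 : ℝ) ≤ n := Nat.one_le_cast.2 hn
    rw [div_le_iff₀ (by linarith)]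
    nlinarith [hdown n, neg_le_abs (y 0), abs_nonneg (y 0)]
  have hlim := (tendsto_add_div_of_tendsto_div hc (y 1 - c 0)).neg
  rw [← hlim.liminf_eq]
  refine liminf_le_liminf ?_ hlim.isBoundedUnder_ge hcobdd
  filter_upwards [eventually_ge_atTop 1] with n hn
  rw [← neg_div]
  exact div_le_div_of_nonneg_right (neg_le_neg (hup n hn)) n.cast_nonneg

theorem tendsto_avg_stepBound {t : ℕ → ℕ} {i : ℕ} {d q : ℝ}
    (h : Tendsto (fun n => (∑ k ∈ range n, if t k = i then (1 : ℝ) else 0) / n) atTop (𝓝 q)) :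
    Tendsto (fun n => (∑ k ∈ range n, stepBound d i (t k)) / n) atTop
      (𝓝 (log 2 - (d + log 2) * q)) := by
  refine (tendsto_const_nhds.sub (tendsto_const_nhds.mul h)).congr' ?_
  filter_upwards [eventually_gt_atTop 0] with n hn
  have hstep : ∀ k, stepBound d i (t k) = log 2 - (d + log 2) * if t k = i then 1 else 0 :=
    fun k => by unfold stepBound; split_ifs <;> ring
  simp only [hstep, sum_sub_distrib, ← mul_sum, sum_const, card_range, nsmul_eq_mul]
  field_simp

end Walk

section Orbit

variable {m : ℕ} {p : ℕ → Fin m → Fin m → Fin m → ℝ} {t : ℕ → ℕ} {x : Fin m → ℝ}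

noncomputable def qsoOrbit (p : ℕ → Fin m → Fin m → Fin m → ℝ) (t : ℕ → ℕ) (x : Fin m → ℝ)
    (n : ℕ) : Fin m → ℝ :=
  (List.range n).foldl (fun y l => qsoMap (p (t l)) y) x

theorem qsoOrbit_succ (n : ℕ) :
    qsoOrbit p t x (n + 1) = qsoMap (p (t n)) (qsoOrbit p t x n) := by
  simp [qsoOrbit, List.range_succ]

theorem qsoOrbit_mem_stdSimplex (hp : ∀ n, IsVolterra_s14 (p n))
    (hx : x ∈ stdSimplex ℝ (Fin m) ∧ ∀ i, 0 < x i) (n : ℕ) :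
    qsoOrbit p t x n ∈ stdSimplex ℝ (Fin m) ∧ ∀ i, 0 < qsoOrbit p t x n i := by
  induction n with
  | zero => exact hx
  | succ n ih => rw [qsoOrbit_succ]; exact (hp _).qsoMap_mem_stdSimplex ih

theorem log_qsoOrbit_succ_sub_le (hp : ∀ n, IsVolterra_s14 (p n))
    (hx : x ∈ stdSimplex ℝ (Fin m) ∧ ∀ i, 0 < x i) (n : ℕ) (i : Fin m) :
    log (qsoOrbit p t x (n + 1) i) - log (qsoOrbit p t x n i) ≤ log 2 := by
  obtain ⟨⟨hnonneg, hsum⟩, hpos⟩ := qsoOrbit_mem_stdSimplex (t := t) hp hx n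
  have hle : qsoOrbit p t x (n + 1) i ≤ 2 * qsoOrbit p t x n i := by
    rw [qsoOrbit_succ]; exact (hp _).qsoMap_le_two_mul hnonneg hsum i
  have := log_le_log ((qsoOrbit_mem_stdSimplex hp hx (n + 1)).2 i) hle
  rw [log_mul two_ne_zero (hpos i).ne'] at this
  linarith

theorem log_qsoOrbit_succ_of_eq (hp : ∀ n, IsVolterra_s14 (p n))
    (hsq : ∀ k : Fin m, ∀ x ∈ stdSimplex ℝ (Fin m), qsoMap (p k) x k = x k ^ 2)
    (hx : x ∈ stdSimplex ℝ (Fin m) ∧ ∀ i, 0 < x i) {n : ℕ} {i : Fin m} (hn : t n = i) :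
    log (qsoOrbit p t x (n + 1) i) = 2 * log (qsoOrbit p t x n i) := by
  rw [qsoOrbit_succ, hn, hsq i _ (qsoOrbit_mem_stdSimplex hp hx n).1, log_pow, Nat.cast_two]

theorem cutoff_log_qsoOrbit_succ_le (hp : ∀ n, IsVolterra_s14 (p n))
    (hsq : ∀ k : Fin m, ∀ x ∈ stdSimplex ℝ (Fin m), qsoMap (p k) x k = x k ^ 2)
    (hx : x ∈ stdSimplex ℝ (Fin m) ∧ ∀ i, 0 < x i) {i : Fin m} {y : ℕ → ℝ} {d : ℝ}
    (hd : -d ≤ log 2) (hy0 : y 0 = log (x i))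
    (hy : ∀ n, y (n + 1) =
      y n + max (log (qsoOrbit p t x (n + 1) i) - log (qsoOrbit p t x n i)) (-d))
    {n : ℕ} (hyn : y n ≤ -d) : y (n + 1) ≤ y n + stepBound d i (t n) :=
  cutoff_succ_le_add_stepBound (z := fun n => log (qsoOrbit p t x n i)) hy0 hy hd
    (fun n => log_qsoOrbit_succ_sub_le hp hx n i) (fun _ hn => log_qsoOrbit_succ_of_eq hp hsq hx hn)
    hyn

theorem measurable_qsoOrbit {Ω : Type*} [MeasurableSpace Ω] {ξ : ℕ → Ω → ℕ}
    (hξ : ∀ n, Measurable (ξ n)) {X : Ω → Fin m → ℝ} (hX : Measurable X) (n : ℕ) :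
    Measurable fun ω => qsoOrbit p (ξ · ω) (X ω) n := by
  induction n with
  | zero => exact hX
  | succ n ih =>
    simp only [qsoOrbit_succ]
    refine measurable_pi_lambda _ fun k => Finset.measurable_sum _ fun i _ =>
      Finset.measurable_sum _ fun j _ => ?_
    have hp : Measurable fun ω => p (ξ n ω) i j k :=
      (measurable_from_top (f := fun s : ℕ => p s i j k)).comp (hξ n)
    exact (hp.mul ((measurable_pi_apply i).comp ih)).mul ((measurable_pi_apply j).comp ih)

end Orbit

section Probability

variable {Ω : Type*} {mΩ : MeasurableSpace Ω} {μ : Measure Ω}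

theorem identDistrib_of_measure_eq_singleton {α : Type*} [MeasurableSpace α]
    [MeasurableSingletonClass α] [Countable α] {f g : Ω → α} (hf : Measurable f)
    (hg : Measurable g) (h : ∀ a, μ {ω | f ω = a} = μ {ω | g ω = a}) : IdentDistrib f g μ μ where
  aemeasurable_fst := hf.aemeasurable
  aemeasurable_snd := hg.aemeasurable
  map_eq := Measure.ext_of_singleton fun a => by
    rw [Measure.map_apply hf (measurableSet_singleton a),
      Measure.map_apply hg (measurableSet_singleton a)]
    exact h a

theorem ae_tendsto_frequency [IsFiniteMeasure μ] {α : Type*} [MeasurableSpace α]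
    [MeasurableSingletonClass α] [DecidableEq α] {ξ : ℕ → Ω → α} (hξ : ∀ n, Measurable (ξ n))
    (hind : iIndepFun ξ μ) (hident : ∀ n, IdentDistrib (ξ n) (ξ 0) μ μ) (a : α) :
    ∀ᵐ ω ∂μ, Tendsto (fun n => (∑ k ∈ range n, if ξ k ω = a then (1 : ℝ) else 0) / n) atTop
      (𝓝 (μ.real {ω | ξ 0 ω = a})) := by
  set g : α → ℝ := fun t => if t = a then 1 else 0
  have hg : Measurable g := Measurable.ite (measurableSet_singleton a) measurable_const
    measurable_const
  have hg0 : g ∘ ξ 0 = {ω | ξ 0 ω = a}.indicator 1 := by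
    ext ω; simp [g, Set.indicator]
  have hmeas : MeasurableSet {ω | ξ 0 ω = a} := hξ 0 (measurableSet_singleton a)
  have hslln := strong_law_ae_real (fun k => g ∘ ξ k)
    (hg0 ▸ (integrable_const 1).indicator hmeas)
    (fun k l hkl => (hind.indepFun hkl).comp hg hg) (fun k => (hident k).comp hg)
  rwa [hg0, integral_indicator_one hmeas] at hslln

theorem ae_tendsto_avg_stepBound [IsFiniteMeasure μ] {ξ : ℕ → Ω → ℕ}
    (hξ : ∀ n, Measurable (ξ n)) (hind : iIndepFun ξ μ) {ν : ℕ → ℝ}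
    (hlaw : ∀ n j, μ {ω | ξ n ω = j} = ENNReal.ofReal (ν j)) (d : ℝ) {i : ℕ} (hνi : 0 ≤ ν i) :
    ∀ᵐ ω ∂μ, Tendsto (fun n => (∑ k ∈ range n, stepBound d i (ξ k ω)) / n) atTop
      (𝓝 (log 2 - (d + log 2) * ν i)) := by
  have hident : ∀ n, IdentDistrib (ξ n) (ξ 0) μ μ := fun n =>
    identDistrib_of_measure_eq_singleton (hξ n) (hξ 0) fun a => by rw [hlaw, hlaw]
  filter_upwards [ae_tendsto_frequency hξ hind hident i] with ω hω
  rw [measureReal_def, hlaw, ENNReal.toReal_ofReal hνi] at hω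
  exact tendsto_avg_stepBound hω

theorem cond_eq_one_of_ae_imp [IsFiniteMeasure μ] {s t : Set Ω} (hs : MeasurableSet s)
    (hs0 : μ s ≠ 0) (h : ∀ᵐ ω ∂μ, ω ∈ s → ω ∈ t) : μ[t | s] = 1 := by
  have hst : (s ∩ t : Set Ω) =ᵐ[μ] s := by
    rw [eventuallyEq_set]
    filter_upwards [h] with ω hω
    exact ⟨And.left, fun hs => ⟨hs, hω hs⟩⟩
  rw [cond_apply hs, measure_congr hst, ENNReal.inv_mul_cancel hs0 (measure_ne_top μ s)]

theorem exists_measureReal_ge_of_ae_exists [IsProbabilityMeasure μ] {K : ℕ → Set Ω}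
    (hK : Monotone K) (h : ∀ᵐ ω ∂μ, ∃ a, ω ∈ K a) {θ : ℝ} (hθ : 0 < θ) :
    ∃ a, 1 - θ ≤ μ.real (K a) := by
  have hunion : μ (⋃ a, K a) = 1 := by
    rw [measure_congr (ae_eq_univ.2 (measure_mono_null (fun ω hω => ?_) (ae_iff.1 h))),
      measure_univ]
    simpa using hω
  have hlim := ENNReal.tendsto_toReal (hunion ▸ ENNReal.one_ne_top) |>.comp
    (tendsto_measure_iUnion_atTop (μ := μ) hK)
  rw [hunion, ENNReal.toReal_one] at hlim
  exact ((hlim.eventually_const_lt (by linarith : 1 - θ < 1)).exists).imp fun _ => le_of_lt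

theorem ae_measureReal_le_condExp_indicator [IsFiniteMeasure μ] {m₀ m₁ : MeasurableSpace Ω}
    (h₀ : m₀ ≤ mΩ) (h₁ : m₁ ≤ mΩ) (hind : Indep m₁ m₀ μ) {A K G : Set Ω}
    (hA : MeasurableSet[m₀] A) (hK : MeasurableSet[m₁] K) (hG : MeasurableSet[mΩ] G)
    (hAKG : A ∩ K ⊆ G) :
    ∀ᵐ ω ∂μ, ω ∈ A → μ.real K ≤ μ[G.indicator (fun _ => (1 : ℝ)) | m₀] ω := by
  have hKint : Integrable (K.indicator fun _ => (1 : ℝ)) μ :=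
    (integrable_const 1).indicator (h₁ _ hK)
  have hmono := condExp_mono (m := m₀) (hKint.indicator (h₀ _ hA))
    ((integrable_const (1 : ℝ)).indicator hG) (Eventually.of_forall fun ω =>
      (Set.indicator_indicator A K (fun _ => (1 : ℝ))).symm ▸
        Set.indicator_le_indicator_of_subset hAKG (fun _ => zero_le_one) ω)
  have hAK := condExp_indicator (m := m₀) hKint hA
  have hKconst : μ[K.indicator fun _ => (1 : ℝ) | m₀] =ᵐ[μ] fun _ => μ.real K := by
    refine (condExp_indep_eq h₁ h₀ (stronglyMeasurable_const.indicator hK) hind).trans ?_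
    simp [integral_indicator (h₁ _ hK), measureReal_def]
  filter_upwards [hmono, hAK, hKconst] with ω hmono hAK hKconst hω
  rwa [hAK, Set.indicator_of_mem hω, hKconst] at hmono

end Probability

section CutoffProcess

variable {Ω : Type*} {mΩ : MeasurableSpace Ω} {μ : Measure Ω} {ι : Type*}
  {Y : ℕ → ι → Ω → ℝ} {c : ι → ℕ → Ω → ℝ} {d : ℝ}

theorem cond_le_liminf_eq_one [IsFiniteMeasure μ] [Countable ι] {L : ι → ℝ} {D : ℝ}
    (hY : ∀ n i, Measurable (Y n i))
    (hstep : ∀ n i ω, Y n i ω ≤ -d → Y (n + 1) i ω ≤ Y n i ω + c i n ω)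
    (hlow : ∀ n i ω, Y n i ω - d ≤ Y (n + 1) i ω)
    (hc : ∀ᵐ ω ∂μ, ∀ i, Tendsto (fun n => (∑ k ∈ range n, c i k ω) / n) atTop (𝓝 (L i)))
    (hD : ∀ i, D ≤ -L i) (j : ι)
    (hE : μ {ω | ∀ i, i ≠ j → ∀ n : ℕ, 1 ≤ n → Y n i ω ≤ -d} ≠ 0) :
    μ[{ω | ∀ i, i ≠ j → D ≤ liminf (fun n : ℕ => -Y n i ω / n) atTop} |
      {ω | ∀ i, i ≠ j → ∀ n : ℕ, 1 ≤ n → Y n i ω ≤ -d}] = 1 := by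
  refine cond_eq_one_of_ae_imp ?_ hE ?_
  · simp only [Set.ofPred_forall]
    exact .iInter fun i => .iInter fun _ => .iInter fun n => .iInter fun _ =>
      measurableSet_le (hY n i) measurable_const
  · filter_upwards [hc] with ω hω hωE i hij
    exact (hD i).trans <| neg_le_liminf_neg_div (fun n hn => hstep n i ω (hωE i hij n hn))
      (fun n => hlow n i ω) (hω i)

theorem exists_pos_ae_le_condExp_trapped [IsProbabilityMeasure μ] [Finite ι]
    {X : Ω → ι → ℝ} (hX : Measurable X) (hXpos : ∀ ω i, 0 < X ω i)
    (hY : ∀ n i, Measurable (Y n i)) (hY0 : ∀ i ω, Y 0 i ω = log (X ω i))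
    (hstep : ∀ n i ω, Y n i ω ≤ -d → Y (n + 1) i ω ≤ Y n i ω + c i n ω)
    {β : Type*} [MeasurableSpace β] {T : Ω → β} (hT : Measurable T)
    (hc : ∀ i k, Measurable[MeasurableSpace.comap T inferInstance] (c i k)) (hind : IndepFun T X μ)
    (hbdd : ∀ᵐ ω ∂μ, ∀ i, BddAbove (Set.range fun n => ∑ k ∈ range n, c i k ω))
    {θ : ℝ} (hθ : 0 < θ) (b : ℝ) :
    ∃ s : ℝ, 0 < s ∧ ∀ᵐ ω ∂μ, (∃ j, ∀ i, i ≠ j → X ω i ≤ s) →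
      1 - θ ≤ (μ[Set.indicator {ω' | ∃ j, ∀ i, i ≠ j → ∀ n : ℕ, 1 ≤ n → Y n i ω' < b}
        (fun _ => (1 : ℝ)) | MeasurableSpace.comap X inferInstance]) ω := by
  set K : ℕ → Set Ω := fun a => {ω | ∀ i n, ∑ k ∈ range n, c i k ω ≤ a}
  have hKmono : Monotone K := fun a a' h ω hω i n => (hω i n).trans (Nat.cast_le.2 h)
  have hKae : ∀ᵐ ω ∂μ, ∃ a, ω ∈ K a := by
    filter_upwards [hbdd] with ω hω
    choose M hM using hω
    obtain ⟨M', hM'⟩ := Finite.bddAbove_range M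
    obtain ⟨a, ha⟩ := exists_nat_ge M'
    exact ⟨a, fun i n => (hM i ⟨n, rfl⟩).trans ((hM' ⟨i, rfl⟩).trans ha)⟩
  obtain ⟨a, ha⟩ := exists_measureReal_ge_of_ae_exists hKmono hKae hθ
  have hKa : MeasurableSet[MeasurableSpace.comap T inferInstance] (K a) := by
    simp only [K, Set.ofPred_forall]
    exact .iInter fun i => .iInter fun n =>
      measurableSet_le (Finset.measurable_sum _ fun k _ => hc i k) measurable_const
  -- on `K a` the walks stay below `a`, so from below `s` the paths stay below `-d` and `b`
  set s := exp (min (-d) (b - 1) - a)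
  refine ⟨s, exp_pos _, ?_⟩
  have hA : MeasurableSet[MeasurableSpace.comap X inferInstance]
      {ω | ∃ j, ∀ i, i ≠ j → X ω i ≤ s} := by
    refine ⟨{x | ∃ j, ∀ i, i ≠ j → x i ≤ s}, ?_, rfl⟩
    simp only [Set.ofPred_exists, Set.ofPred_forall]
    exact .iUnion fun j => .iInter fun i => .iInter fun _ =>
      measurableSet_le (measurable_pi_apply i) measurable_const
  have hG : MeasurableSet[mΩ] {ω' | ∃ j, ∀ i, i ≠ j → ∀ n : ℕ, 1 ≤ n → Y n i ω' < b} := by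
    simp only [Set.ofPred_exists, Set.ofPred_forall]
    exact .iUnion fun j => .iInter fun i => .iInter fun _ => .iInter fun n => .iInter fun _ =>
      measurableSet_lt (hY n i) measurable_const
  refine (ae_measureReal_le_condExp_indicator hX.comap_le hT.comap_le
    ((IndepFun_iff_Indep T X μ).1 hind) hA hKa hG ?_).mono fun ω hω hωA => ha.trans (hω hωA)
  rintro ω ⟨⟨j, hj⟩, hωK⟩
  refine ⟨j, fun i hij n _ => ?_⟩
  have hsum : ∀ n, log s + ∑ k ∈ range n, c i k ω ≤ min (-d) (b - 1) := fun n => by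
    rw [log_exp]; linarith [hωK i n]
  have := le_add_sum_of_trapped (y := fun n => Y n i ω) (fun n => hstep n i ω)
    (by rw [hY0]; exact log_le_log (hXpos ω i) (hj i hij))
    (fun n => (hsum n).trans (min_le_left _ _)) n
  linarith [(hsum n).trans (min_le_right _ _)]

end CutoffProcess

theorem cutoff_log_process_convergence_general
    {Ω : Type*} {mΩ : MeasurableSpace Ω} (μ : Measure Ω) [IsProbabilityMeasure μ]
    (m : ℕ) (hm : 2 ≤ m)
    (p : ℕ → Fin m → Fin m → Fin m → ℝ)
    (hnonneg : ∀ n i j l, 0 ≤ p n i j l)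
    (hsum : ∀ n i j, ∑ l, p n i j l = 1)
    (hvol : ∀ n i j l, l ≠ i → l ≠ j → p n i j l = 0)
    (hsq : ∀ k : Fin m, ∀ x ∈ stdSimplex ℝ (Fin m), qsoMap (p (k : ℕ)) x k = x k ^ 2)
    (ν : ℕ → ℝ)
    (hνpos : ∀ k : Fin m, 0 < ν (k : ℕ))
    (ξ : ℕ → Ω → ℕ) (hξmeas : ∀ n, Measurable (ξ n))
    (hindep : iIndepFun ξ μ)
    (hlaw : ∀ n j, μ {ω | ξ n ω = j} = ENNReal.ofReal (ν j))
    (X : Ω → Fin m → ℝ) (hXmeas : Measurable X)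
    (hXsimplex : ∀ ω, X ω ∈ stdSimplex ℝ (Fin m) ∧ ∀ i, 0 < X ω i)
    (hXindep : IndepFun X (fun ω (n : ℕ) => ξ n ω) μ)
    (d : ℝ) (hd₂ : ∀ i : Fin m, (1 / ν (i : ℕ)) * Real.log 2 < d)
    (F : ℕ → MeasurableSpace Ω)
    (hF : ∀ n, F n = MeasurableSpace.comap X inferInstance ⊔
        ⨆ l ∈ Finset.range n, MeasurableSpace.comap (ξ l) inferInstance)
    (Z : ℕ → Fin m → Ω → ℝ)
    (hZ : ∀ n i ω, Z n i ω =
      Real.log (((List.range n).foldl (fun y l => qsoMap (p (ξ l ω)) y) (X ω)) i))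
    (Y : ℕ → Fin m → Ω → ℝ)
    (hY0 : ∀ i ω, Y 0 i ω = Real.log (X ω i))
    (hYstep : ∀ n i ω, Y (n + 1) i ω = Y n i ω + max (Z (n + 1) i ω - Z n i ω) (-d)) :
    (0 < ⨅ i : Fin m, (ν (i : ℕ) * d - Real.log 2)) ∧
    (∀ j : Fin m,
      μ {ω | ∀ i : Fin m, i ≠ j → ∀ n : ℕ, 1 ≤ n → Y n i ω ≤ -d} ≠ 0 →
      ProbabilityTheory.cond μ {ω | ∀ i : Fin m, i ≠ j → ∀ n : ℕ, 1 ≤ n → Y n i ω ≤ -d}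
        {ω | ∀ i : Fin m, i ≠ j →
          (⨅ i' : Fin m, (ν (i' : ℕ) * d - Real.log 2)) ≤
            Filter.atTop.liminf (fun n : ℕ => -Y n i ω / n)} = 1) ∧
    (∀ θ : ℝ, 0 < θ → ∀ b : ℝ, ∃ s : ℝ, 0 < s ∧ ∀ᵐ ω ∂μ,
      (∃ j : Fin m, ∀ i : Fin m, i ≠ j → X ω i ≤ s) →
      1 - θ ≤ (μ[Set.indicator {ω' | ∃ j : Fin m, ∀ i : Fin m, i ≠ j →
          ∀ n : ℕ, 1 ≤ n → Y n i ω' < b} (fun _ => (1 : ℝ)) | F 0]) ω) := by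
  have : Nonempty (Fin m) := ⟨⟨0, by omega⟩⟩
  have hgap : ∀ i : Fin m, 0 < ν i * d - log 2 := fun i => by
    have := hd₂ i
    rw [one_div, inv_mul_lt_iff₀ (hνpos i)] at this
    linarith
  have hdrift : ∀ i : Fin m, ν i * d - log 2 ≤ -(log 2 - (d + log 2) * ν i) := fun i => by
    nlinarith [hνpos i, log_pos one_lt_two]
  have hd : -d ≤ log 2 := by
    obtain ⟨i⟩ := ‹Nonempty (Fin m)›
    nlinarith [hgap i, hνpos i, log_pos one_lt_two]
  have hZ' : ∀ n i ω, Z n i ω = log (qsoOrbit p (ξ · ω) (X ω) n i) := hZ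
  have hZmeas : ∀ n i, Measurable (Z n i) := fun n i => by
    simp only [funext (hZ' n i)]
    exact measurable_log.comp
      ((measurable_pi_apply i).comp (measurable_qsoOrbit hξmeas hXmeas n))
  have hYmeas : ∀ n i, Measurable (Y n i) := fun n i =>
    measurable_cutoff (d := d) (z := fun n => Z n i) (y := fun n => Y n i) (hZmeas · i)
      (funext fun ω => by rw [hY0, hZ]; rfl) (fun n => funext (hYstep n i)) n
  have hstep : ∀ n (i : Fin m) ω,
      Y n i ω ≤ -d → Y (n + 1) i ω ≤ Y n i ω + stepBound d i (ξ n ω) := fun n i ω =>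
    cutoff_log_qsoOrbit_succ_le (y := (Y · i ω)) (fun n => ⟨hnonneg n, hsum n, hvol n⟩) hsq
      (hXsimplex ω) hd (hY0 i ω) (fun n => by rw [hYstep, hZ', hZ'])
  have havg := ae_all_iff.2 fun i : Fin m =>
    ae_tendsto_avg_stepBound hξmeas hindep hlaw d (hνpos i).le
  refine ⟨?_, fun j hE => cond_le_liminf_eq_one hYmeas hstep ?_ havg
    (fun i => (ciInf_le (Set.finite_range _).bddBelow i).trans (hdrift i)) j hE, fun θ hθ b => ?_⟩
  · obtain ⟨i, hi⟩ := exists_eq_ciInf_of_finite (f := fun i : Fin m => ν i * d - log 2)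
    exact hi ▸ hgap i
  · intro n i ω
    rw [hYstep]
    linarith [le_max_right (Z (n + 1) i ω - Z n i ω) (-d)]
  · rw [show F 0 = MeasurableSpace.comap X inferInstance by simp [hF 0]]
    refine exists_pos_ae_le_condExp_trapped hXmeas (fun ω => (hXsimplex ω).2) hYmeas hY0 hstep
      (measurable_pi_lambda _ hξmeas) (fun i k => (measurable_from_top (f := stepBound d i)).comp
        ((measurable_pi_apply k).comp (comap_measurable fun ω (n : ℕ) => ξ n ω)))
      hXindep.symm ?_ hθ b
    filter_upwards [havg] with ω hω i
    exact bddAbove_range_of_tendsto_div_neg (hω i) (by linarith [hgap i, hdrift i])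

/-- For the cut-off log-coordinate process `Y_n^i`, with
`D := min_{i ≤ m} (ν_i d - log 2) > 0`: for every `j`, conditionally on
`{Y_n^i ≤ -d for all i ≠ j, n ≥ 1}` (if it has positive probability), a.s.
`liminf -Y_n^i / n ≥ D` for all `i ≠ j`; and for every `θ > 0`, `b ∈ ℝ` there is
`s > 0` such that a.s. on `{X ∈ Ū_s}` one has
`ℙ(∃ j ∀ i ≠ j ∀ n ≥ 1 : Y_n^i < b | ℱ_0) ≥ 1 - θ`. -/
theorem cutoff_log_process_convergence
    {Ω : Type*} {mΩ : MeasurableSpace Ω} (μ : Measure Ω) [IsProbabilityMeasure μ]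
    (m : ℕ) (hm : 2 ≤ m)
    (p : ℕ → Fin m → Fin m → Fin m → ℝ)
    (hsymm : ∀ n i j l, p n i j l = p n j i l)
    (hnonneg : ∀ n i j l, 0 ≤ p n i j l)
    (hsum : ∀ n i j, ∑ l, p n i j l = 1)
    (hvol : ∀ n i j l, l ≠ i → l ≠ j → p n i j l = 0)
    (hsq : ∀ k : Fin m, ∀ x ∈ stdSimplex ℝ (Fin m), qsoMap (p (k : ℕ)) x k = x k ^ 2)
    (ν : ℕ → ℝ) (hν0 : ∀ j, 0 ≤ ν j) (hν1 : ∑' j, ν j = 1)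
    (hνpos : ∀ k : Fin m, 0 < ν (k : ℕ))
    (ξ : ℕ → Ω → ℕ) (hξmeas : ∀ n, Measurable (ξ n))
    (hindep : iIndepFun ξ μ)
    (hlaw : ∀ n j, μ {ω | ξ n ω = j} = ENNReal.ofReal (ν j))
    (X : Ω → Fin m → ℝ) (hXmeas : Measurable X)
    (hXsimplex : ∀ ω, X ω ∈ stdSimplex ℝ (Fin m) ∧ ∀ i, 0 < X ω i)
    (hXlog : ∀ i : Fin m, Integrable (fun ω => |Real.log (X ω i)|) μ)
    (hXindep : IndepFun X (fun ω (n : ℕ) => ξ n ω) μ)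
    (d : ℝ) (hd₁ : Real.log m < d) (hd₂ : ∀ i : Fin m, (1 / ν (i : ℕ)) * Real.log 2 < d)
    (F : ℕ → MeasurableSpace Ω)
    (hF : ∀ n, F n = MeasurableSpace.comap X inferInstance ⊔
        ⨆ l ∈ Finset.range n, MeasurableSpace.comap (ξ l) inferInstance)
    (Z : ℕ → Fin m → Ω → ℝ)
    (hZ : ∀ n i ω, Z n i ω =
      Real.log (((List.range n).foldl (fun y l => qsoMap (p (ξ l ω)) y) (X ω)) i))
    (Y : ℕ → Fin m → Ω → ℝ)
    (hY0 : ∀ i ω, Y 0 i ω = Real.log (X ω i))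
    (hYstep : ∀ n i ω, Y (n + 1) i ω = Y n i ω + max (Z (n + 1) i ω - Z n i ω) (-d)) :
    (0 < ⨅ i : Fin m, (ν (i : ℕ) * d - Real.log 2)) ∧
    (∀ j : Fin m,
      μ {ω | ∀ i : Fin m, i ≠ j → ∀ n : ℕ, 1 ≤ n → Y n i ω ≤ -d} ≠ 0 →
      ProbabilityTheory.cond μ {ω | ∀ i : Fin m, i ≠ j → ∀ n : ℕ, 1 ≤ n → Y n i ω ≤ -d}
        {ω | ∀ i : Fin m, i ≠ j →
          (⨅ i' : Fin m, (ν (i' : ℕ) * d - Real.log 2)) ≤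
            Filter.atTop.liminf (fun n : ℕ => -Y n i ω / n)} = 1) ∧
    (∀ θ : ℝ, 0 < θ → ∀ b : ℝ, ∃ s : ℝ, 0 < s ∧ ∀ᵐ ω ∂μ,
      (∃ j : Fin m, ∀ i : Fin m, i ≠ j → X ω i ≤ s) →
      1 - θ ≤ (μ[Set.indicator {ω' | ∃ j : Fin m, ∀ i : Fin m, i ≠ j →
          ∀ n : ℕ, 1 ≤ n → Y n i ω' < b} (fun _ => (1 : ℝ)) | F 0]) ω) :=
  cutoff_log_process_convergence_general (mΩ := mΩ) μ m hm p hnonneg hsum hvol hsq ν hνpos ξ hξmeas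
    hindep hlaw X hXmeas hXsimplex hXindep d hd₂ F hF Z hZ Y hY0 hYstep
end
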